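/- arXiv:1612.06125 — 6 statements merged into one kernel-verified Lean document; each statement's English description precedes it below -/
import Mathlib

section
/- Let ν and μ be probability measures on ℝ with densities f/Z_f and g/Z_g respectively, where g(x) = e^{mx} f(x), f is even, nonnegative and integrable, m > 0, Z_f = ∫f, Z_g = ∫g. Then the total variation distance ‖μ − ν‖_TV = ∫ (1 − dμ/dν)⁺ dν satisfies ‖μ − ν‖_TV ≥ ∫_0^∞ (1 − e^{-mx}) ν(dx). -/
/-!
Since `f` is even, `ν` is invariant under `x ↦ -x`, which turns `∫_{x > 0} (1 - e^{-mx}) dν` into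
`∫ (1 - e^{mx})⁺ dν`. Since `cosh ≥ 1`, evenness also gives `Z_f ≤ ∫ cosh (mx) f = Z_g`, so
`(1 - e^{mx})⁺ ≤ (1 - e^{mx} Z_f / Z_g)⁺` pointwise.
-/

open MeasureTheory Real Set

theorem isNegInvariant_withDensity_of_even {g : ℝ → ENNReal} (hg : ∀ x, g (-x) = g x) :
    (volume.withDensity g).IsNegInvariant := by
  refine ⟨Measure.ext fun s hs => ?_⟩
  rw [Measure.neg, Measure.map_apply measurable_neg hs, withDensity_apply _ (measurable_neg hs),
    withDensity_apply _ hs, ← (Measure.measurePreserving_neg volume).setLIntegral_comp_preimage_emb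
      measurableEmbedding_neg g s]
  simp only [hg]

theorem integral_le_integral_exp_mul_of_even {f : ℝ → ℝ} (m : ℝ) (heven : ∀ x, f (-x) = f x)
    (hnonneg : ∀ x, 0 ≤ f x) (hint : Integrable f)
    (hint' : Integrable fun x => exp (m * x) * f x) :
    ∫ x, f x ≤ ∫ x, exp (m * x) * f x := by
  have hint_neg : Integrable fun x => exp (-(m * x)) * f x := by
    simpa [heven] using hint'.comp_neg
  have hreflect : ∫ x, exp (-(m * x)) * f x = ∫ x, exp (m * x) * f x := by
    simpa [heven] using integral_neg_eq_self (fun x => exp (m * x) * f x) volume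
  calc ∫ x, f x
      ≤ ∫ x, (exp (m * x) * f x + exp (-(m * x)) * f x) / 2 := by
        refine integral_mono hint ((hint'.add hint_neg).div_const 2) fun x => ?_
        have hcosh := one_le_cosh (m * x)
        rw [cosh_eq] at hcosh
        nlinarith [hnonneg x]
    _ = ∫ x, exp (m * x) * f x := by
        rw [integral_div, integral_add hint' hint_neg, hreflect]
        ring

theorem setIntegral_Ioi_one_sub_exp_neg_eq (ν : Measure ℝ) [ν.IsNegInvariant] {m : ℝ}
    (hm : 0 ≤ m) :
    ∫ x in Ioi 0, (1 - exp (-(m * x))) ∂ν = ∫ x, max (1 - exp (m * x)) 0 ∂ν := by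
  calc ∫ x in Ioi 0, (1 - exp (-(m * x))) ∂ν
      = ∫ x in Ioi 0, max (1 - exp (-(m * x))) 0 ∂ν := by
        refine setIntegral_congr_fun measurableSet_Ioi fun x hx => (max_eq_left ?_).symm
        have : exp (-(m * x)) ≤ 1 := exp_le_one_iff.2 (by nlinarith [mem_Ioi.1 hx])
        linarith
    _ = ∫ x, max (1 - exp (-(m * x))) 0 ∂ν := by
        refine setIntegral_eq_integral_of_forall_compl_eq_zero fun x hx => max_eq_right ?_
        have : 1 ≤ exp (-(m * x)) := one_le_exp (by nlinarith [notMem_Ioi.1 hx])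
        linarith
    _ = ∫ x, max (1 - exp (m * x)) 0 ∂ν := by
        simpa using integral_neg_eq_self (fun x => max (1 - exp (m * x)) 0) ν

theorem integral_max_one_sub_exp_le (ν : Measure ℝ) [IsFiniteMeasure ν] (m : ℝ) {c : ℝ}
    (hc₀ : 0 ≤ c) (hc₁ : c ≤ 1) :
    ∫ x, max (1 - exp (m * x)) 0 ∂ν ≤ ∫ x, max (1 - exp (m * x) * c) 0 ∂ν := by
  have hbound : ∀ x, ‖max (1 - exp (m * x) * c) 0‖ ≤ 1 := fun x => by
    rw [norm_of_nonneg (le_max_right _ _)]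
    exact max_le (sub_le_self 1 (mul_nonneg (exp_pos _).le hc₀)) zero_le_one
  have hint : Integrable (fun x => max (1 - exp (m * x) * c) 0) ν :=
    (integrable_const 1).mono' (by fun_prop : Continuous _).aestronglyMeasurable
      (ae_of_all _ hbound)
  refine integral_mono_of_nonneg (ae_of_all _ fun _ => le_max_right _ _) hint
    (ae_of_all _ fun x => max_le_max_right 0 (sub_le_sub_left ?_ 1))
  exact mul_le_of_le_one_right (exp_pos _).le hc₁

theorem tv_lower_bound_even_density (f : ℝ → ℝ) (m : ℝ) (hm : 0 < m)
    (heven : ∀ x, f (-x) = f x) (hnonneg : ∀ x, 0 ≤ f x)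
    (hint : Integrable f)
    (hint' : Integrable fun x => Real.exp (m * x) * f x)
    (Zf Zg : ℝ) (hZf : Zf = ∫ x, f x) (hZg : Zg = ∫ x, Real.exp (m * x) * f x)
    (hZfpos : 0 < Zf)
    (ν : Measure ℝ)
    (hν : ν = volume.withDensity fun x => ENNReal.ofReal (f x / Zf)) :
    ∫ x in Set.Ioi (0:ℝ), (1 - Real.exp (-(m * x))) ∂ν
      ≤ ∫ x, max (1 - Real.exp (m * x) * Zf / Zg) 0 ∂ν := by
  have : IsFiniteMeasure ν :=
    hν ▸ isFiniteMeasure_withDensity_ofReal (hint.div_const Zf).hasFiniteIntegral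
  have : ν.IsNegInvariant := hν ▸ isNegInvariant_withDensity_of_even fun x => by rw [heven]
  have hZ : Zf ≤ Zg := hZf ▸ hZg ▸ integral_le_integral_exp_mul_of_even m heven hnonneg hint hint'
  have hZg_pos : 0 < Zg := hZfpos.trans_le hZ
  simp_rw [mul_div_assoc]
  rw [setIntegral_Ioi_one_sub_exp_neg_eq ν hm.le]
  exact integral_max_one_sub_exp_le ν m (div_nonneg hZfpos.le hZg_pos.le)
    ((div_le_one hZg_pos).2 hZ)
end

section
/- The total variation distance between the d-dimensional normal distributions N(a, b·I_d) and N(ã, b·I_d), with a, ã ∈ ℝ^d and b > 0, equals Φ₁(‖a − ã‖/(2√b)), where Φ₁(r) = √(2/π) ∫₀^r exp(−x²/2) dx. -/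
open MeasureTheory

/-- The Gaussian measure on `ℝ^d` with mean `a` and covariance `b • I_d` (for `b > 0`),
defined via its Lebesgue density. -/
noncomputable def gaussianEuclidean {d : ℕ} (a : EuclideanSpace ℝ (Fin d)) (b : ℝ) :
    Measure (EuclideanSpace ℝ (Fin d)) :=
  volume.withDensity fun x =>
    ENNReal.ofReal ((2 * Real.pi * b) ^ (-(d : ℝ) / 2) *
      Real.exp (-‖x - a‖ ^ 2 / (2 * b)))


open MeasureTheory Real Set

namespace TVGauss

variable {d : ℕ} {b : ℝ}

noncomputable def gdens (a : EuclideanSpace ℝ (Fin d)) (b : ℝ)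
    (x : EuclideanSpace ℝ (Fin d)) : ℝ :=
  (2 * Real.pi * b) ^ (-(d : ℝ) / 2) * Real.exp (-‖x - a‖ ^ 2 / (2 * b))

lemma gdens_nonneg (hb : 0 < b) (a : EuclideanSpace ℝ (Fin d))
    (x : EuclideanSpace ℝ (Fin d)) : 0 ≤ gdens a b x := by
  unfold gdens
  have : (0:ℝ) < 2 * Real.pi * b := by positivity
  positivity

lemma continuous_gdens (a : EuclideanSpace ℝ (Fin d)) :
    Continuous (gdens a b) := by
  unfold gdens
  fun_prop

set_option maxHeartbeats 1000000 in
lemma integrable_gdens (hb : 0 < b) (a : EuclideanSpace ℝ (Fin d)) :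
    Integrable (gdens a b) := by
  have h0 : Integrable (fun v : EuclideanSpace ℝ (Fin d) =>
      rexp (-(1/(2*b)) * ‖v‖^2)) := by
    have hc : (0:ℝ) < (1/(2*b)) := by positivity
    have h1 := (GaussianFourier.integrable_cexp_neg_mul_sq_norm_add_of_euclideanSpace (ι := Fin d)
        (b := ((1/(2*b) : ℝ) : ℂ)) (by simpa using hc) 0 0).re
    refine h1.congr (Filter.Eventually.of_forall fun v => ?_)
    simp only [Complex.ofReal_zero, zero_mul, add_zero]
    rw [show (-(((1:ℝ)/(2*b) : ℝ) : ℂ) * (‖v‖:ℂ)^2) = (((-(1/(2*b)) * ‖v‖^2 : ℝ)) : ℂ) by push_cast; ring]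
    exact Complex.exp_ofReal_re _
  have h2 : Integrable (fun x : EuclideanSpace ℝ (Fin d) =>
      rexp (-(1/(2*b)) * ‖x - a‖^2)) := h0.comp_sub_right a
  have h3 := h2.const_mul ((2 * Real.pi * b) ^ (-(d : ℝ) / 2))
  have he : gdens a b = fun x : EuclideanSpace ℝ (Fin d) =>
      (2 * Real.pi * b) ^ (-(d : ℝ) / 2) * rexp (-(1/(2*b)) * ‖x - a‖^2) := by
    funext x
    unfold gdens
    congr 1
    ring_nf
  rw [he]
  exact h3

lemma apply_eq (hb : 0 < b) (a : EuclideanSpace ℝ (Fin d))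
    {A : Set (EuclideanSpace ℝ (Fin d))} (hA : MeasurableSet A) :
    gaussianEuclidean a b A = ENNReal.ofReal (∫ x in A, gdens a b x) := by
  rw [gaussianEuclidean, withDensity_apply _ hA]
  rw [ofReal_integral_eq_lintegral_ofReal ((integrable_gdens hb a).integrableOn)
    (Filter.Eventually.of_forall fun x => gdens_nonneg hb a x)]
  rfl

lemma toReal_apply (hb : 0 < b) (a : EuclideanSpace ℝ (Fin d))
    {A : Set (EuclideanSpace ℝ (Fin d))} (hA : MeasurableSet A) :
    (gaussianEuclidean a b A).toReal = ∫ x in A, gdens a b x := by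
  rw [apply_eq hb a hA, ENNReal.toReal_ofReal
    (integral_nonneg fun x => gdens_nonneg hb a x)]



lemma onedim {b : ℝ} (hb : 0 < b) {m : ℝ} (hm : 0 < m) :
    ∫ t : ℝ, max ((2 * π * b) ^ (-(1:ℝ)/2) * rexp (-t^2/(2*b))
        - (2 * π * b) ^ (-(1:ℝ)/2) * rexp (-(t-m)^2/(2*b))) 0
      = Real.sqrt (2/π) * ∫ x in (0:ℝ)..(m/(2*Real.sqrt b)), rexp (-x^2/2) := by
  have h2πb : (0:ℝ) < 2 * π * b := by positivity
  set c : ℝ := (2 * π * b) ^ (-(1:ℝ)/2) with hc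
  have hcpos : 0 < c := rpow_pos_of_pos h2πb _
  have hf : Integrable (fun t : ℝ => c * rexp (-t^2/(2*b))) := by
    have h0 : Integrable (fun t : ℝ => rexp (-(1/(2*b)) * t^2)) :=
      integrable_exp_neg_mul_sq (by positivity)
    have he : (fun t : ℝ => c * rexp (-t^2/(2*b)))
        = fun t : ℝ => c * rexp (-(1/(2*b)) * t^2) := by
      funext t; congr 1; ring_nf
    rw [he]; exact h0.const_mul c
  have hf2 : Integrable (fun t : ℝ => c * rexp (-(t-m)^2/(2*b))) :=
    hf.comp_sub_right m
  -- max = indicator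
  have hind : (fun t : ℝ => max (c * rexp (-t^2/(2*b)) - c * rexp (-(t-m)^2/(2*b))) 0)
      = Set.indicator (Iic (m/2))
        (fun t : ℝ => c * rexp (-t^2/(2*b)) - c * rexp (-(t-m)^2/(2*b))) := by
    funext t
    by_cases ht : t ≤ m/2
    · rw [Set.indicator_of_mem (by exact ht : t ∈ Iic (m/2))]
      refine max_eq_left (sub_nonneg.mpr ?_)
      have : rexp (-(t-m)^2/(2*b)) ≤ rexp (-t^2/(2*b)) := by
        apply Real.exp_le_exp.mpr
        refine div_le_div_of_nonneg_right ?_ (by positivity)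
        nlinarith
      exact mul_le_mul_of_nonneg_left this hcpos.le
    · rw [Set.indicator_of_notMem (by exact ht : t ∉ Iic (m/2))]
      refine max_eq_right (sub_nonpos.mpr ?_)
      have : rexp (-t^2/(2*b)) ≤ rexp (-(t-m)^2/(2*b)) := by
        apply Real.exp_le_exp.mpr
        refine div_le_div_of_nonneg_right ?_ (by positivity)
        push_neg at ht
        nlinarith
      exact mul_le_mul_of_nonneg_left this hcpos.le
  rw [hind, integral_indicator measurableSet_Iic]
  rw [integral_sub hf.integrableOn hf2.integrableOn]
  have htrans : ∫ t in Iic (m/2), c * rexp (-(t-m)^2/(2*b))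
      = ∫ t in Iic (m/2 - m), c * rexp (-t^2/(2*b)) := by
    have hmp : MeasurePreserving (fun t : ℝ => t - m) volume volume :=
      measurePreserving_sub_right volume m
    have hemb : MeasurableEmbedding (fun t : ℝ => t - m) :=
      (MeasurableEquiv.subRight m).measurableEmbedding
    have := hmp.setIntegral_preimage_emb hemb
      (fun t => c * rexp (-t^2/(2*b))) (Iic (m/2 - m))
    have hpre : (fun t : ℝ => t - m) ⁻¹' (Iic (m/2 - m)) = Iic (m/2) := by
      ext t; simp [sub_le_sub_iff_right]
    rw [hpre] at this
    exact this
  rw [htrans]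
  rw [intervalIntegral.integral_Iic_sub_Iic hf.integrableOn hf.integrableOn]
  -- now ∫ t in (m/2 - m)..(m/2), c * rexp (-t^2/(2*b))
  have hsplit : ∫ t in (m/2 - m)..(m/2), c * rexp (-t^2/(2*b))
      = 2 * ∫ t in (0:ℝ)..(m/2), c * rexp (-t^2/(2*b)) := by
    have hmm : m/2 - m = -(m/2) := by ring
    rw [hmm]
    rw [← intervalIntegral.integral_add_adjacent_intervals
      (hf.intervalIntegrable) (hf.intervalIntegrable)]
    have hneg : ∫ t in (-(m/2))..(0:ℝ), c * rexp (-t^2/(2*b))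
        = ∫ t in (0:ℝ)..(m/2), c * rexp (-t^2/(2*b)) := by
      have h := intervalIntegral.integral_comp_neg (a := (0:ℝ)) (b := m/2)
        (fun t : ℝ => c * rexp (-t^2/(2*b)))
      rw [neg_zero] at h
      rw [← h]
      apply intervalIntegral.integral_congr
      intro x hx
      simp [neg_sq]
    rw [hneg]; ring
  rw [hsplit]
  -- substitution
  have hsb : Real.sqrt b ≠ 0 := by positivity
  have hsub : ∫ x in (0:ℝ)..(m/(2*Real.sqrt b)), rexp (-x^2/2)
      = (Real.sqrt b)⁻¹ * ∫ t in (0:ℝ)..(m/2), rexp (-t^2/(2*b)) := by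
    have h := intervalIntegral.integral_comp_mul_left
      (fun t : ℝ => rexp (-t^2/(2*b))) (c := Real.sqrt b) hsb
      (a := (0:ℝ)) (b := m/(2*Real.sqrt b))
    have heq : (fun x : ℝ => rexp (-(Real.sqrt b * x)^2/(2*b))) = fun x : ℝ => rexp (-x^2/2) := by
      funext x
      congr 1
      rw [mul_pow, Real.sq_sqrt hb.le]
      field_simp
    rw [heq] at h
    rw [h]
    rw [mul_zero, show Real.sqrt b * (m/(2*Real.sqrt b)) = m/2 by field_simp]
    simp [smul_eq_mul]
  rw [intervalIntegral.integral_const_mul, hsub]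
  -- final algebra : 2 * (c * I) = √(2/π) * ((√b)⁻¹ * I)
  have hcval : c = (Real.sqrt (2 * π * b))⁻¹ := by
    rw [hc, show (-(1:ℝ)/2) = -(1/2 : ℝ) by norm_num, Real.rpow_neg h2πb.le,
      ← Real.sqrt_eq_rpow]
  have hsqrt : Real.sqrt (2 * π * b) = Real.sqrt (2*π) * Real.sqrt b := by
    rw [← Real.sqrt_mul (by positivity)]
  have key : 2 * c = Real.sqrt (2/π) * (Real.sqrt b)⁻¹ := by
    rw [hcval, hsqrt]
    have h2π : Real.sqrt (2*π) = Real.sqrt 2 * Real.sqrt π := by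
      rw [← Real.sqrt_mul (by norm_num)]
    have hdiv : Real.sqrt (2/π) = Real.sqrt 2 / Real.sqrt π :=
      Real.sqrt_div (by norm_num) π
    rw [h2π, hdiv]
    have h22 : Real.sqrt 2 * Real.sqrt 2 = 2 := Real.mul_self_sqrt (by norm_num)
    have hπ0 : 0 < Real.sqrt π := Real.sqrt_pos.mpr Real.pi_pos
    have hb0 : 0 < Real.sqrt b := Real.sqrt_pos.mpr hb
    field_simp
    linear_combination (-1 : ℝ) * h22
  linear_combination (∫ t in (0:ℝ)..(m/2), rexp (-t^2/(2*b))) * key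

lemma max_prod_helper {d : ℕ} (i0 : Fin d) (q r : Fin d → ℝ) (hq : ∀ i, 0 ≤ q i)
    (hr : ∀ i, i ≠ i0 → r i = q i) :
    max (∏ i, q i - ∏ i, r i) 0
      = max (q i0 - r i0) 0 * ∏ i ∈ Finset.univ.erase i0, q i := by
  rw [← Finset.mul_prod_erase _ q (Finset.mem_univ i0),
    ← Finset.mul_prod_erase _ r (Finset.mem_univ i0),
    Finset.prod_congr rfl (fun i hi => hr i (Finset.ne_of_mem_erase hi)),
    ← sub_mul, max_mul_of_nonneg _ _ (Finset.prod_nonneg fun i _ => hq i), zero_mul]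

lemma prodstep {d : ℕ} {b : ℝ} (hb : 0 < b) (i0 : Fin d) {m : ℝ} (hm : 0 < m) :
    ∫ y : EuclideanSpace ℝ (Fin d),
      max (gdens 0 b y - gdens (m • EuclideanSpace.single i0 (1:ℝ)) b y) 0
      = Real.sqrt (2/π) * ∫ x in (0:ℝ)..(m/(2*Real.sqrt b)), rexp (-x^2/2) := by
  have h2πb : (0:ℝ) < 2 * π * b := by positivity
  set c : ℝ := (2 * π * b) ^ (-(1:ℝ)/2) with hc
  have hcpos : 0 < c := rpow_pos_of_pos h2πb _
  have hcval : c = (Real.sqrt (2 * π * b))⁻¹ := by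
    rw [hc, show (-(1:ℝ)/2) = -(1/2 : ℝ) by norm_num, Real.rpow_neg h2πb.le,
      ← Real.sqrt_eq_rpow]
  set g : Fin d → ℝ → ℝ := fun i t => if i = i0 then
      max (c * rexp (-t^2/(2*b)) - c * rexp (-(t-m)^2/(2*b))) 0
    else c * rexp (-t^2/(2*b)) with hg
  have mp := (EuclideanSpace.volume_preserving_symm_measurableEquiv_toLp (Fin d)).symm
  rw [← mp.integral_comp (MeasurableEquiv.measurableEmbedding _)]
  have hC : ((2 * π * b : ℝ)) ^ (-(d:ℝ)/2) = c ^ (d:ℕ) := by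
    rw [hc, ← Real.rpow_natCast ((2 * π * b) ^ (-(1:ℝ)/2)) d, ← Real.rpow_mul h2πb.le]
    congr 1
    ring
  have hpoint : ∀ x : Fin d → ℝ,
      max (gdens 0 b ((MeasurableEquiv.toLp 2 (Fin d → ℝ)) x)
        - gdens (m • EuclideanSpace.single i0 (1:ℝ)) b
            ((MeasurableEquiv.toLp 2 (Fin d → ℝ)) x)) 0
      = ∏ i, g i (x i) := by
    intro x
    set y := (MeasurableEquiv.toLp 2 (Fin d → ℝ)) x with hy
    have hyi : ∀ i, y i = x i := fun i => rfl
    have hn1 : ‖y - 0‖^2 = ∑ i, (x i)^2 := by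
      rw [sub_zero, EuclideanSpace.norm_eq, Real.sq_sqrt (Finset.sum_nonneg fun i _ => by positivity)]
      exact Finset.sum_congr rfl fun i _ => by rw [hyi, Real.norm_eq_abs, sq_abs]
    have hn2 : ‖y - m • EuclideanSpace.single i0 (1:ℝ)‖^2
        = ∑ i, (x i - if i = i0 then m else 0)^2 := by
      rw [EuclideanSpace.norm_eq, Real.sq_sqrt (Finset.sum_nonneg fun i _ => by positivity)]
      refine Finset.sum_congr rfl fun i _ => ?_
      have happ : (y - m • EuclideanSpace.single i0 (1:ℝ)) i
          = x i - (if i = i0 then m else 0) := by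
        rw [PiLp.sub_apply, PiLp.smul_apply, EuclideanSpace.single_apply, hyi]
        split_ifs <;> simp
      rw [happ, Real.norm_eq_abs, sq_abs]
    have hexp : ∀ (s : Fin d → ℝ), rexp (-(∑ i, s i)/(2*b)) = ∏ i, rexp (-(s i)/(2*b)) := by
      intro s
      rw [← Real.exp_sum]
      congr 1
      rw [← Finset.sum_div, Finset.sum_neg_distrib]
    unfold gdens
    rw [hC, hn1, hn2, hexp, hexp]
    rw [show (c ^ (d:ℕ) : ℝ) = ∏ _i : Fin d, c by simp]
    rw [← Finset.prod_mul_distrib, ← Finset.prod_mul_distrib]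
    rw [max_prod_helper i0 _ _ (fun i => by positivity)
      (fun i hi => by simp [if_neg hi])]
    rw [← Finset.mul_prod_erase _ (fun i => g i (x i)) (Finset.mem_univ i0)]
    congr 1
    · simp only [hg, if_pos rfl]
      norm_num
    · refine Finset.prod_congr rfl fun i hi => ?_
      simp only [hg, if_neg (Finset.ne_of_mem_erase hi)]
  calc (∫ x : Fin d → ℝ, max (gdens 0 b ((MeasurableEquiv.toLp 2 (Fin d → ℝ)) x)
        - gdens (m • EuclideanSpace.single i0 (1:ℝ)) b
            ((MeasurableEquiv.toLp 2 (Fin d → ℝ)) x)) 0)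
      = ∫ x : Fin d → ℝ, ∏ i, g i (x i) := by
        congr 1
        funext x
        exact hpoint x
    _ = ∏ i, ∫ t : ℝ, g i t := MeasureTheory.integral_fintype_prod_eq_prod (ι := Fin d) g
    _ = Real.sqrt (2/π) * ∫ x in (0:ℝ)..(m/(2*Real.sqrt b)), rexp (-x^2/2) := by
        have hone : ∫ t : ℝ, c * rexp (-t^2/(2*b)) = 1 := by
          have he : (fun t : ℝ => c * rexp (-t^2/(2*b)))
              = fun t : ℝ => c * rexp (-(2*b)⁻¹ * t^2) := by
            funext t; congr 1; ring
          rw [he, MeasureTheory.integral_const_mul, integral_gaussian,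
            show π / (2*b)⁻¹ = 2 * π * b by field_simp, hcval]
          exact inv_mul_cancel₀ (ne_of_gt (Real.sqrt_pos.mpr h2πb))
        rw [← Finset.mul_prod_erase _ (fun i => ∫ t : ℝ, g i t) (Finset.mem_univ i0)]
        have herase : ∏ i ∈ Finset.univ.erase i0, (∫ t : ℝ, g i t) = 1 :=
          Finset.prod_eq_one fun i hi => by
            simp only [hg, if_neg (Finset.ne_of_mem_erase hi)]
            exact hone
        rw [herase, mul_one]
        simp only [hg, if_pos rfl]
        exact onedim hb hm

lemma key {d : ℕ} {b : ℝ} (hb : 0 < b) (a a2 : EuclideanSpace ℝ (Fin d)) :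
    ∫ x, max (gdens a b x - gdens a2 b x) 0
      = Real.sqrt (2/π) * ∫ x in (0:ℝ)..(‖a - a2‖/(2*Real.sqrt b)), rexp (-x^2/2) := by
  rcases eq_or_ne a a2 with h | h
  · subst h
    simp
  · have hne : Nonempty (Fin d) := by
      by_contra h0
      rw [not_nonempty_iff] at h0
      exact h (PiLp.ext fun i => (h0.false i).elim)
    obtain ⟨i0⟩ := hne
    set m := ‖a - a2‖ with hmdef
    have hm : 0 < m := norm_sub_pos_iff.mpr h
    set e1 : EuclideanSpace ℝ (Fin d) := EuclideanSpace.single i0 (1:ℝ) with he1def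
    have he1 : ‖e1‖ = 1 := by rw [he1def, EuclideanSpace.norm_single]; norm_num
    set u : EuclideanSpace ℝ (Fin d) := m⁻¹ • (a2 - a) with hudef
    have hu : ‖u‖ = 1 := by
      rw [hudef, norm_smul, norm_inv, Real.norm_eq_abs, abs_of_pos hm, norm_sub_rev, ← hmdef]
      field_simp
    set L := (Submodule.reflection (ℝ ∙ (u - e1))ᗮ) with hL
    have hLu : L u = e1 := Submodule.reflection_sub (by rw [hu, he1])
    have hmu : a2 - a = m • u := by
      rw [hudef, smul_smul, mul_inv_cancel₀ (ne_of_gt hm), one_smul]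
    have hL2 : L (a2 - a) = m • e1 := by rw [hmu, _root_.map_smul, hLu]
    have hpt : ∀ x, max (gdens a b x - gdens a2 b x) 0
        = max (gdens 0 b (L (x - a)) - gdens (m • e1) b (L (x - a))) 0 := by
      intro x
      unfold gdens
      have h1 : ‖L (x - a) - 0‖ = ‖x - a‖ := by rw [sub_zero, L.norm_map]
      have h2 : ‖L (x - a) - m • e1‖ = ‖x - a2‖ := by
        rw [← hL2, ← map_sub, L.norm_map]
        congr 1
        abel
      rw [h1, h2]
    simp_rw [hpt]
    have t1 : ∫ x, max (gdens 0 b (L (x - a)) - gdens (m • e1) b (L (x - a))) 0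
        = ∫ x, max (gdens 0 b (L x) - gdens (m • e1) b (L x)) 0 :=
      integral_sub_right_eq_self
        (fun x => max (gdens 0 b (L x) - gdens (m • e1) b (L x)) 0) a
    rw [t1]
    have t2 : ∫ x, max (gdens 0 b (L x) - gdens (m • e1) b (L x)) 0
        = ∫ y, max (gdens 0 b y - gdens (m • e1) b y) 0 :=
      L.measurePreserving.integral_comp L.toHomeomorph.measurableEmbedding
        (fun y => max (gdens 0 b y - gdens (m • e1) b y) 0)
    rw [t2, he1def]
    exact prodstep hb i0 hm

theorem tv_gaussian_same_covariance' {d : ℕ} (a a2 : EuclideanSpace ℝ (Fin d))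
    (b : ℝ) (hb : 0 < b) :
    (⨆ (A : Set (EuclideanSpace ℝ (Fin d))) (_ : MeasurableSet A),
        |(gaussianEuclidean a b A).toReal - (gaussianEuclidean a2 b A).toReal|)
      = Real.sqrt (2 / Real.pi) *
        ∫ x in (0:ℝ)..(‖a - a2‖ / (2 * Real.sqrt b)), Real.exp (-x ^ 2 / 2) := by
  classical
  set T := Real.sqrt (2 / Real.pi) *
    ∫ x in (0:ℝ)..(‖a - a2‖ / (2 * Real.sqrt b)), Real.exp (-x ^ 2 / 2) with hTdef
  have hkey : ∫ x, max (gdens a b x - gdens a2 b x) 0 = T := key hb a a2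
  have hkey2 : ∫ x, max (gdens a2 b x - gdens a b x) 0 = T := by
    rw [key hb a2 a, norm_sub_rev]
  have hT0 : 0 ≤ T := hkey ▸ integral_nonneg (fun x => le_max_right _ _)
  have main : ∀ (a₁ a₂ : EuclideanSpace ℝ (Fin d)) (A : Set (EuclideanSpace ℝ (Fin d))),
      (∫ x in A, (gdens a₁ b x - gdens a₂ b x))
        ≤ ∫ x, max (gdens a₁ b x - gdens a₂ b x) 0 := by
    intro a₁ a₂ A
    have hin : Integrable (fun x => gdens a₁ b x - gdens a₂ b x) :=
      (integrable_gdens hb a₁).sub (integrable_gdens hb a₂)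
    calc ∫ x in A, (gdens a₁ b x - gdens a₂ b x)
        ≤ ∫ x in A, max (gdens a₁ b x - gdens a₂ b x) 0 :=
          integral_mono hin.integrableOn hin.pos_part.integrableOn
            (fun x => le_max_left _ _)
      _ ≤ ∫ x, max (gdens a₁ b x - gdens a₂ b x) 0 :=
          setIntegral_le_integral hin.pos_part
            (Filter.Eventually.of_forall fun x => le_max_right _ _)
  have hbound : ∀ A : Set (EuclideanSpace ℝ (Fin d)), MeasurableSet A →
      |(gaussianEuclidean a b A).toReal - (gaussianEuclidean a2 b A).toReal| ≤ T := by
    intro A hA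
    rw [toReal_apply hb a hA, toReal_apply hb a2 hA]
    have e1 : (∫ x in A, gdens a b x) - ∫ x in A, gdens a2 b x
        = ∫ x in A, (gdens a b x - gdens a2 b x) :=
      (integral_sub ((integrable_gdens hb a).integrableOn)
        ((integrable_gdens hb a2).integrableOn)).symm
    rw [e1]
    have hneg : -(∫ x in A, (gdens a b x - gdens a2 b x))
        = ∫ x in A, (gdens a2 b x - gdens a b x) := by
      rw [← integral_neg]
      congr 1
      funext x
      ring
    refine abs_le.mpr ⟨?_, (main a a2 A).trans (le_of_eq hkey)⟩
    have h2 := (main a2 a A).trans (le_of_eq hkey2)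
    linarith [hneg ▸ h2]
  refine le_antisymm (ciSup_le fun A => Real.iSup_le (fun hA => hbound A hA) hT0) ?_
  set A0 := {x : EuclideanSpace ℝ (Fin d) | gdens a2 b x ≤ gdens a b x} with hA0def
  have hA0 : MeasurableSet A0 :=
    measurableSet_le (continuous_gdens a2).measurable (continuous_gdens a).measurable
  have hindeq : A0.indicator (fun x => gdens a b x - gdens a2 b x)
      = fun x => max (gdens a b x - gdens a2 b x) 0 := by
    funext x
    by_cases hx : x ∈ A0
    · rw [Set.indicator_of_mem hx]
      exact (max_eq_left (sub_nonneg.mpr hx)).symm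
    · rw [Set.indicator_of_notMem hx]
      have : gdens a b x < gdens a2 b x := lt_of_not_ge hx
      exact (max_eq_right (sub_nonpos.mpr this.le)).symm
  have hval : (gaussianEuclidean a b A0).toReal - (gaussianEuclidean a2 b A0).toReal = T := by
    rw [toReal_apply hb a hA0, toReal_apply hb a2 hA0,
      ← integral_sub ((integrable_gdens hb a).integrableOn)
        ((integrable_gdens hb a2).integrableOn),
      ← integral_indicator hA0, hindeq]
    exact hkey
  have hBdd : BddAbove (Set.range fun A : Set (EuclideanSpace ℝ (Fin d)) =>
      ⨆ (_ : MeasurableSet A),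
        |(gaussianEuclidean a b A).toReal - (gaussianEuclidean a2 b A).toReal|) := by
    refine ⟨T, ?_⟩
    rintro _ ⟨A, rfl⟩
    exact Real.iSup_le (fun hA => hbound A hA) hT0
  calc T = |(gaussianEuclidean a b A0).toReal - (gaussianEuclidean a2 b A0).toReal| := by
        rw [hval, abs_of_nonneg hT0]
    _ = ⨆ (_ : MeasurableSet A0),
          |(gaussianEuclidean a b A0).toReal - (gaussianEuclidean a2 b A0).toReal| :=
        (ciSup_pos (f := fun _ : MeasurableSet A0 =>
          |(gaussianEuclidean a b A0).toReal - (gaussianEuclidean a2 b A0).toReal|) hA0).symm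
    _ ≤ _ := le_ciSup hBdd A0

end TVGauss

theorem tv_gaussian_same_covariance {d : ℕ} (a a2 : EuclideanSpace ℝ (Fin d))
    (b : ℝ) (hb : 0 < b) :
    (⨆ (A : Set (EuclideanSpace ℝ (Fin d))) (_ : MeasurableSet A),
        |(gaussianEuclidean a b A).toReal - (gaussianEuclidean a2 b A).toReal|)
      = Real.sqrt (2 / Real.pi) *
        ∫ x in (0:ℝ)..(‖a - a2‖ / (2 * Real.sqrt b)), Real.exp (-x ^ 2 / 2) :=
  TVGauss.tv_gaussian_same_covariance' a a2 b hb
end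

section
/- Suppose M, K, L, ℛ ≥ 0 with K > 0 and M ≤ Kℛ, ℛ>0. Let κ(r) = L for r < ℛ and κ(r) = −K for r ≥ ℛ, and define α = (M/2)∫₀^∞ exp((1/2)∫₀^x (M + κ(y)y) dy) dx. Then α ≤ (π^{1/2} e^{1/2} K^{−1/2} + 2ℛ/max(4, Lℛ² + 2Mℛ)) · M · exp(Mℛ/2 + Lℛ²/4). -/
/-!
On `[0, R]` the potential `F x = ∫₀ˣ (M + κ y y) dy = M x + L x² / 2` is convex with `F 0 = 0`,
so `F x / 2 ≤ c x` with `c = M / 2 + L R / 4`. Beyond `R`, `M ≤ K R` gives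
`F x / 2 ≤ c R - K (x - R)² / 4`. Integrating these exponential majorants gives at most
`R e^{cR} / max 1 (cR)` on `(0, R]` and `2 e^{cR} √(π / K)` on `(R, ∞)`; the factor `e^{1/2}`
in the bound is slack.
-/

open MeasureTheory Set Real

lemma integral_const_add_mul (c d a b : ℝ) :
    ∫ y in a..b, c + d * y = c * (b - a) + d * (b ^ 2 - a ^ 2) / 2 := by
  rw [intervalIntegral.integral_add intervalIntegrable_const
    ((by fun_prop : Continuous fun y : ℝ => d * y).intervalIntegrable _ _),
    intervalIntegral.integral_const, intervalIntegral.integral_const_mul, integral_id, smul_eq_mul]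
  ring

lemma integral_exp_mul_le_div_max {c R : ℝ} (hc : 0 ≤ c) (hR : 0 ≤ R) :
    ∫ x in (0:ℝ)..R, exp (c * x) ≤ R * exp (c * R) / max 1 (c * R) := by
  rcases le_or_gt (c * R) 1 with hcR | hcR
  · rw [max_eq_left hcR, div_one]
    calc ∫ x in (0:ℝ)..R, exp (c * x) ≤ ∫ _ in (0:ℝ)..R, exp (c * R) :=
          intervalIntegral.integral_mono_on hR
            ((by fun_prop : Continuous fun x => exp (c * x)).intervalIntegrable _ _)
            intervalIntegrable_const
            fun x hx => exp_le_exp.mpr (mul_le_mul_of_nonneg_left hx.2 hc)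
      _ = R * exp (c * R) := by simp
  · have hcR0 : 0 < c * R := one_pos.trans hcR
    have hc0 : 0 < c := pos_of_mul_pos_left hcR0 hR
    rw [max_eq_right hcR.le, intervalIntegral.integral_comp_mul_left (fun x => exp x) hc0.ne',
      integral_exp, mul_zero, exp_zero, smul_eq_mul]
    calc c⁻¹ * (exp (c * R) - 1) ≤ c⁻¹ * exp (c * R) := by gcongr; linarith
      _ = R * exp (c * R) / (c * R) := by
          rw [mul_comm c R, 
            mul_div_mul_left _ _ (pos_of_mul_pos_right hcR0 hc).ne', inv_mul_eq_div]

lemma integral_Ioi_exp_neg_mul_sq_sub_le {b : ℝ} (hb : 0 < b) (a : ℝ) :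
    ∫ x in Ioi a, exp (-b * (x - a) ^ 2) ≤ √(π / b) := by
  calc ∫ x in Ioi a, exp (-b * (x - a) ^ 2) ≤ ∫ x, exp (-b * (x - a) ^ 2) :=
        setIntegral_le_integral ((integrable_exp_neg_mul_sq hb).comp_sub_right a)
          (.of_forall fun _ => (exp_pos _).le)
    _ = √(π / b) := by
        rw [integral_sub_right_eq_self (fun x => exp (-b * x ^ 2)) a, integral_gaussian]

lemma sqrt_div_le_rpow_mul_exp_half (a : ℝ) {b : ℝ} (hb : 0 < b) :
    √(a / b) ≤ a ^ ((1:ℝ)/2) * exp ((1:ℝ)/2) * b ^ (-(1:ℝ)/2) := by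
  rw [mul_right_comm, neg_div, rpow_neg hb.le, ← sqrt_eq_rpow, ← sqrt_eq_rpow,
    ← div_eq_mul_inv, ← sqrt_div' _ hb.le]
  exact le_mul_of_one_le_right (sqrt_nonneg _) (one_le_exp (by norm_num))

lemma setIntegral_Ioi_le_add_of_le {f g h : ℝ → ℝ} {a b : ℝ} (hab : a ≤ b)
    (hf : ∀ x ∈ Ioi a, 0 ≤ f x) (hg : IntegrableOn g (Ioc a b)) (hh : IntegrableOn h (Ioi b))
    (hfg : ∀ x ∈ Ioc a b, f x ≤ g x) (hfh : ∀ x ∈ Ioi b, f x ≤ h x) :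
    ∫ x in Ioi a, f x ≤ (∫ x in Ioc a b, g x) + ∫ x in Ioi b, h x := by
  have hg' := (hg.integrable_indicator measurableSet_Ioc).integrableOn (s := Ioi a)
  have hh' := (hh.integrable_indicator measurableSet_Ioi).integrableOn (s := Ioi a)
  calc ∫ x in Ioi a, f x ≤ ∫ x in Ioi a, (Ioc a b).indicator g x + (Ioi b).indicator h x := by
        refine integral_mono_of_nonneg (ae_restrict_of_forall_mem measurableSet_Ioi hf)
          (hg'.add hh') (ae_restrict_of_forall_mem measurableSet_Ioi fun x hx => ?_)
        rcases le_or_gt x b with hxb | hxb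
        · have hx : x ∈ Ioc a b := ⟨hx, hxb⟩
          simpa [indicator_of_mem hx, indicator_of_notMem (notMem_Ioi.mpr hxb)] using hfg x hx
        · simpa [indicator_of_notMem (fun h : x ∈ Ioc a b => hxb.not_ge h.2),
            indicator_of_mem (mem_Ioi.mpr hxb)] using hfh x hxb
    _ = (∫ x in Ioc a b, g x) + ∫ x in Ioi b, h x := by
        rw [integral_add hg' hh', setIntegral_indicator measurableSet_Ioc,
          setIntegral_indicator measurableSet_Ioi, inter_eq_right.mpr Ioc_subset_Ioi_self,
          inter_eq_right.mpr (Ioi_subset_Ioi hab)]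

section Potential

variable {M K L R : ℝ} {κ : ℝ → ℝ}

lemma intervalIntegrable_drift (hκ : ∀ r, κ r = if r < R then L else -K) (a b : ℝ) :
    IntervalIntegrable (fun y => M + κ y * y) volume a b := by
  have hpiece : (fun y => M + κ y * y) =
      (Iio R).piecewise (fun y => M + L * y) (fun y => M + -K * y) := by
    ext y
    by_cases h : y < R <;> simp [hκ, h, Set.piecewise]
  rw [hpiece, intervalIntegrable_iff]
  exact Integrable.piecewise measurableSet_Iio
    ((by fun_prop : Continuous fun y => M + L * y).integrableOn_uIoc.integrableOn)
    ((by fun_prop : Continuous fun y => M + -K * y).integrableOn_uIoc.integrableOn)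

lemma integral_drift_of_le (hκ : ∀ r, κ r = if r < R then L else -K) {x : ℝ}
    (hx : 0 ≤ x) (hxR : x ≤ R) :
    ∫ y in (0:ℝ)..x, M + κ y * y = M * x + L * x ^ 2 / 2 := by
  have hae : ∀ᵐ y, y ∈ uIoc 0 x → M + κ y * y = M + L * y := by
    filter_upwards [Measure.ae_ne volume R] with y hyR hy
    rw [uIoc_of_le hx] at hy
    rw [hκ, if_pos (lt_of_le_of_ne (hy.2.trans hxR) hyR)]
  rw [intervalIntegral.integral_congr_ae hae, integral_const_add_mul]
  ring

lemma integral_drift_of_ge (hκ : ∀ r, κ r = if r < R then L else -K) (hR : 0 ≤ R) {x : ℝ}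
    (hx : R ≤ x) :
    ∫ y in (0:ℝ)..x, M + κ y * y = M * x + (L + K) * R ^ 2 / 2 - K * x ^ 2 / 2 := by
  have htail : ∫ y in R..x, M + κ y * y = ∫ y in R..x, M + -K * y := by
    refine intervalIntegral.integral_congr fun y hy => ?_
    rw [uIcc_of_le hx] at hy
    simp [hκ, not_lt.mpr hy.1]
  rw [← intervalIntegral.integral_add_adjacent_intervals (intervalIntegrable_drift hκ 0 R)
    (intervalIntegrable_drift hκ R x), integral_drift_of_le hκ hR le_rfl, htail,
    integral_const_add_mul]
  ring

lemma half_integral_drift_le_of_le (hκ : ∀ r, κ r = if r < R then L else -K) (hL : 0 ≤ L)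
    {x : ℝ} (hx : 0 ≤ x) (hxR : x ≤ R) :
    1 / 2 * ∫ y in (0:ℝ)..x, M + κ y * y ≤ (M / 2 + L * R / 4) * x := by
  rw [integral_drift_of_le hκ hx hxR]
  nlinarith [mul_nonneg (mul_nonneg hL hx) (sub_nonneg.mpr hxR)]

lemma half_integral_drift_le_of_ge (hκ : ∀ r, κ r = if r < R then L else -K) (hR : 0 ≤ R)
    (hMK : M ≤ K * R) {x : ℝ} (hx : R ≤ x) :
    1 / 2 * ∫ y in (0:ℝ)..x, M + κ y * y ≤
      (M / 2 + L * R / 4) * R - K / 4 * (x - R) ^ 2 := by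
  rw [integral_drift_of_ge hκ hR hx]
  nlinarith [mul_nonneg (sub_nonneg.mpr hMK) (sub_nonneg.mpr hx)]

lemma integral_exp_half_drift_le (hκ : ∀ r, κ r = if r < R then L else -K) (hL : 0 ≤ L)
    (hM : 0 ≤ M) (hK : 0 < K) (hR : 0 < R) (hMK : M ≤ K * R) :
    ∫ x in Ioi 0, exp (1 / 2 * ∫ y in (0:ℝ)..x, M + κ y * y) ≤
      R * exp (M * R / 2 + L * R ^ 2 / 4) / max 1 (M * R / 2 + L * R ^ 2 / 4) +
        2 * √(π / K) * exp (M * R / 2 + L * R ^ 2 / 4) := by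
  set c := M / 2 + L * R / 4
  have hc : 0 ≤ c := by positivity
  have hK4 : 0 < K / 4 := by positivity
  have hmajorant := setIntegral_Ioi_le_add_of_le hR.le (fun x _ => (exp_pos _).le)
    (by fun_prop : Continuous fun x => exp (c * x)).integrableOn_Ioc
    (((integrable_exp_neg_mul_sq hK4).comp_sub_right R).const_mul (exp (c * R))).integrableOn
    (fun x hx => exp_le_exp.mpr (half_integral_drift_le_of_le hκ hL hx.1.le hx.2))
    (fun x hx => by
      rw [← exp_add]
      exact exp_le_exp.mpr <| (half_integral_drift_le_of_ge hκ hR.le hMK (le_of_lt hx)).trans_eq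
        (by ring))
  rw [← intervalIntegral.integral_of_le hR.le, integral_const_mul] at hmajorant
  have hsqrt : √(π / (K / 4)) = 2 * √(π / K) := by
    rw [show π / (K / 4) = 2 ^ 2 * (π / K) by ring, sqrt_mul (by positivity), sqrt_sq zero_le_two]
  rw [show M * R / 2 + L * R ^ 2 / 4 = c * R by ring, ← hsqrt, mul_comm √(π / (K / 4))]
  refine hmajorant.trans (add_le_add (integral_exp_mul_le_div_max hc hR.le) ?_)
  gcongr
  exact integral_Ioi_exp_neg_mul_sq_sub_le hK4 R

end Potential

theorem alpha_bound_small_M (M K L R : ℝ) (hM : 0 ≤ M) (hL : 0 ≤ L)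
    (hK : 0 < K) (hR : 0 < R) (hMK : M ≤ K * R)
    (κ : ℝ → ℝ) (hκ : ∀ r, κ r = if r < R then L else -K)
    (α : ℝ)
    (hα : α = (M / 2) * ∫ x in Set.Ioi (0:ℝ),
        Real.exp ((1/2) * ∫ y in (0:ℝ)..x, M + κ y * y)) :
    α ≤ (Real.pi ^ ((1:ℝ)/2) * Real.exp ((1:ℝ)/2) * K ^ (-(1:ℝ)/2) +
          2 * R / max 4 (L * R ^ 2 + 2 * M * R)) * M *
        Real.exp (M * R / 2 + L * R ^ 2 / 4) := by
  set E := M * R / 2 + L * R ^ 2 / 4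
  have hmax : max 4 (L * R ^ 2 + 2 * M * R) = 4 * max 1 E := by
    rw [mul_max_of_nonneg _ _ (by norm_num : (0:ℝ) ≤ 4)]; congr 1 <;> ring
  rw [hα, hmax]
  calc M / 2 * ∫ x in Ioi 0, exp (1 / 2 * ∫ y in (0:ℝ)..x, M + κ y * y)
      ≤ M / 2 * (R * exp E / max 1 E + 2 * √(π / K) * exp E) := by
        gcongr
        exact integral_exp_half_drift_le hκ hL hM hK hR hMK
    _ = (√(π / K) + 2 * R / (4 * max 1 E)) * M * exp E := by
        field_simp; ring
    _ ≤ _ := by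
        gcongr
        exact sqrt_div_le_rpow_mul_exp_half π hK
end

section
/- Suppose M, K, L, ℛ > 0 with M ≥ Kℛ. Let κ(r) = L for r < ℛ and κ(r) = −K for r ≥ ℛ, and α = (M/2)∫₀^∞ exp((1/2)∫₀^x (M + κ(y)y) dy) dx. Then α ≤ (√(π/K) + 2ℛ/max(4, 2Mℛ + Lℛ²)) · M · exp(M²/(4K) + (L+K)ℛ²/4). -/
/-!
On `[0, R]` the exponent `½ ∫₀ˣ (M + κ y · y) dy = M x / 2 + L x² / 4` is at most `c x` with
`c = M / 2 + L R / 4`, so that piece contributes at most `(e^{cR} - 1) / c`. On `[R, ∞)` the exponent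
is the concave parabola `E - K (x - M / K)² / 4` with `E = M² / (4K) + (L + K) R² / 4`, so that piece
is bounded by the full Gaussian integral `2 √(π / K) e^E`. Finally `cR ≤ E` (the difference is
`(M - K R)² / (4K)`) and `(e^t - 1) max 1 t ≤ t e^t` turn the first bound into `R e^E / max 1 (cR)`.
-/

open MeasureTheory Real Set intervalIntegral
open scoped Interval

lemma exp_sub_one_mul_max_le (t : ℝ) : (exp t - 1) * max 1 t ≤ t * exp t := by
  rcases le_total t 1 with h | h
  · rw [max_eq_left h, mul_one]
    have : (1 - t) * exp t ≤ 1 :=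
      calc (1 - t) * exp t ≤ exp (-t) * exp t := by gcongr; linarith [add_one_le_exp (-t)]
        _ = 1 := by rw [← exp_add, neg_add_cancel, exp_zero]
    linarith
  · rw [max_eq_right h]
    nlinarith

lemma exp_mul_sub_one_div_le {c R E : ℝ} (hc : 0 < c) (hR : 0 ≤ R) (hE : c * R ≤ E) :
    (exp (c * R) - 1) / c ≤ R * exp E / max 1 (c * R) := by
  rw [div_le_div_iff₀ hc (lt_max_of_lt_left one_pos)]
  calc (exp (c * R) - 1) * max 1 (c * R) ≤ c * R * exp (c * R) :=
        exp_sub_one_mul_max_le _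
    _ ≤ c * R * exp E := by gcongr
    _ = R * exp E * c := by ring

lemma integral_exp_const_mul {c : ℝ} (hc : c ≠ 0) (a b : ℝ) :
    ∫ x in a..b, exp (c * x) = (exp (c * b) - exp (c * a)) / c := by
  rw [integral_comp_mul_left (fun x => exp x) hc, integral_exp, smul_eq_mul, inv_mul_eq_div]

lemma integral_const_add_mul_id (p q a b : ℝ) :
    ∫ y in a..b, p + q * y = (b - a) * p + q * ((b ^ 2 - a ^ 2) / 2) := by
  rw [integral_add intervalIntegrable_const (intervalIntegrable_id.const_mul q),
    intervalIntegral.integral_const_mul, intervalIntegral.integral_const, integral_id, smul_eq_mul]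

lemma setIntegral_Ioi_exp_neg_mul_sq_sub_le {b : ℝ} (hb : 0 < b) (m a : ℝ) :
    ∫ x in Ioi a, exp (-b * (x - m) ^ 2) ≤ √(π / b) :=
  calc ∫ x in Ioi a, exp (-b * (x - m) ^ 2) ≤ ∫ x, exp (-b * (x - m) ^ 2) :=
        setIntegral_le_integral ((integrable_exp_neg_mul_sq hb).comp_sub_right m)
          (ae_of_all _ fun _ => (exp_pos _).le)
    _ = √(π / b) := by
        rw [integral_sub_right_eq_self (fun x => exp (-b * x ^ 2)) m, integral_gaussian]

noncomputable def stickyDrift (M K L R y : ℝ) : ℝ := M + (if y < R then L else -K) * y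

/-- Unnormalised density of the invariant measure of the sticky SDE on `(0, ∞)`. -/
noncomputable def stickyDensity (M K L R x : ℝ) : ℝ :=
  exp ((1 / 2) * ∫ y in 0..x, stickyDrift M K L R y)

section

variable {M K L R : ℝ}

lemma intervalIntegrable_stickyDrift (hLK : -K ≤ L) (a b : ℝ) :
    IntervalIntegrable (stickyDrift M K L R) volume a b := by
  have hκ : Antitone fun y : ℝ => if y < R then L else -K := by
    intro x y hxy
    dsimp only
    split_ifs <;> linarith
  exact intervalIntegrable_const.add (hκ.intervalIntegrable.mul_continuousOn continuousOn_id)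

lemma integral_stickyDrift_of_le {x : ℝ} (hx : 0 ≤ x) (hxR : x ≤ R) :
    ∫ y in 0..x, stickyDrift M K L R y = M * x + L * x ^ 2 / 2 := by
  have hae : ∀ᵐ y, y ∈ Ι 0 x → stickyDrift M K L R y = M + L * y := by
    filter_upwards [(countable_singleton R).ae_notMem volume] with y hyR hy
    rw [uIoc_of_le hx] at hy
    have : y < R := lt_of_le_of_ne (hy.2.trans hxR) hyR
    simp [stickyDrift, this]
  rw [integral_congr_ae hae, integral_const_add_mul_id]
  ring

lemma integral_stickyDrift_of_ge (hLK : -K ≤ L) (hR : 0 ≤ R) {x : ℝ} (hx : R ≤ x) :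
    ∫ y in 0..x, stickyDrift M K L R y = M * x + (L + K) * R ^ 2 / 2 - K * x ^ 2 / 2 := by
  have hEq : EqOn (stickyDrift M K L R) (fun y => M + -K * y) (uIcc R x) := by
    intro y hy
    have : ¬ y < R := not_lt.2 (uIcc_of_le hx ▸ hy).1
    simp [stickyDrift, this]
  rw [← integral_add_adjacent_intervals (intervalIntegrable_stickyDrift hLK 0 R)
    (intervalIntegrable_stickyDrift hLK R x), integral_stickyDrift_of_le hR le_rfl,
    integral_congr hEq, integral_const_add_mul_id]
  ring

lemma continuous_stickyDensity (hLK : -K ≤ L) : Continuous (stickyDensity M K L R) :=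
  continuous_exp.comp
    (continuous_const.mul (continuous_primitive (intervalIntegrable_stickyDrift hLK) 0))

lemma integral_stickyDensity_le (hL : 0 ≤ L) (hLK : -K ≤ L) (hR : 0 ≤ R)
    (hc : 0 < M / 2 + L * R / 4) :
    ∫ x in 0..R, stickyDensity M K L R x
      ≤ (exp ((M / 2 + L * R / 4) * R) - 1) / (M / 2 + L * R / 4) := by
  have hmono : ∀ x ∈ Icc 0 R, stickyDensity M K L R x ≤ exp ((M / 2 + L * R / 4) * x) := by
    rintro x ⟨hx0, hxR⟩
    rw [stickyDensity, integral_stickyDrift_of_le hx0 hxR, exp_le_exp]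
    nlinarith [mul_le_mul_of_nonneg_left hxR (mul_nonneg hL hx0)]
  calc ∫ x in 0..R, stickyDensity M K L R x
      ≤ ∫ x in 0..R, exp ((M / 2 + L * R / 4) * x) :=
        integral_mono_on hR ((continuous_stickyDensity hLK).intervalIntegrable _ _)
          ((continuous_const.mul continuous_id).rexp.intervalIntegrable _ _) hmono
    _ = _ := by rw [integral_exp_const_mul hc.ne', mul_zero, exp_zero]

lemma stickyDensity_eq_of_ge (hK : 0 < K) (hLK : -K ≤ L) (hR : 0 ≤ R) {x : ℝ} (hx : R ≤ x) :
    stickyDensity M K L R x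
      = exp (M ^ 2 / (4 * K) + (L + K) * R ^ 2 / 4) * exp (-(K / 4) * (x - M / K) ^ 2) := by
  rw [stickyDensity, integral_stickyDrift_of_ge hLK hR hx, ← exp_add]
  congr 1
  field_simp
  ring

lemma integrableOn_Ioi_stickyDensity (hK : 0 < K) (hLK : -K ≤ L) (hR : 0 ≤ R) :
    IntegrableOn (stickyDensity M K L R) (Ioi R) := by
  refine (((integrable_exp_neg_mul_sq (by positivity : 0 < K / 4)).comp_sub_right (M / K)).const_mul
    (exp (M ^ 2 / (4 * K) + (L + K) * R ^ 2 / 4))).integrableOn.congr_fun ?_ measurableSet_Ioi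
  exact fun x hx => (stickyDensity_eq_of_ge hK hLK hR (le_of_lt hx)).symm

lemma setIntegral_Ioi_stickyDensity_le (hK : 0 < K) (hLK : -K ≤ L) (hR : 0 ≤ R) :
    ∫ x in Ioi R, stickyDensity M K L R x
      ≤ exp (M ^ 2 / (4 * K) + (L + K) * R ^ 2 / 4) * (2 * √(π / K)) := by
  rw [setIntegral_congr_fun measurableSet_Ioi
    fun x hx => stickyDensity_eq_of_ge hK hLK hR (le_of_lt hx), MeasureTheory.integral_const_mul]
  gcongr
  calc ∫ x in Ioi R, exp (-(K / 4) * (x - M / K) ^ 2) ≤ √(π / (K / 4)) :=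
        setIntegral_Ioi_exp_neg_mul_sq_sub_le (by positivity) _ _
    _ = 2 * √(π / K) := by
        rw [show π / (K / 4) = 2 ^ 2 * (π / K) by ring, sqrt_mul (by norm_num),
          sqrt_sq zero_le_two]

end

theorem alpha_bound_large_M_general (M K L R : ℝ) (hM : 0 < M) (hL : 0 < L)
    (hK : 0 < K) (hR : 0 < R)
    (κ : ℝ → ℝ) (hκ : ∀ r, κ r = if r < R then L else -K)
    (α : ℝ)
    (hα : α = (M / 2) * ∫ x in Set.Ioi (0:ℝ),
        Real.exp ((1/2) * ∫ y in (0:ℝ)..x, M + κ y * y)) :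
    α ≤ (Real.sqrt (Real.pi / K) + 2 * R / max 4 (2 * M * R + L * R ^ 2)) * M *
        Real.exp (M ^ 2 / (4 * K) + (L + K) * R ^ 2 / 4) := by
  have hLK : -K ≤ L := by linarith
  have hα' : α = M / 2 * ∫ x in Ioi 0, stickyDensity M K L R x := by
    simp only [hα, hκ]
    rfl
  have hcE : (M / 2 + L * R / 4) * R ≤ M ^ 2 / (4 * K) + (L + K) * R ^ 2 / 4 := by
    have : M ^ 2 / (4 * K) + (L + K) * R ^ 2 / 4 - (M / 2 + L * R / 4) * R
        = (M - K * R) ^ 2 / (4 * K) := by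
      field_simp
      ring
    linarith [div_nonneg (sq_nonneg (M - K * R)) (by positivity : (0:ℝ) ≤ 4 * K)]
  have hmax : max 4 (2 * M * R + L * R ^ 2) = 4 * max 1 ((M / 2 + L * R / 4) * R) := by
    rw [mul_max_of_nonneg _ _ (by norm_num : (0:ℝ) ≤ 4)]
    ring_nf
  set c := M / 2 + L * R / 4
  set E := M ^ 2 / (4 * K) + (L + K) * R ^ 2 / 4
  rw [hα', ← integral_interval_add_Ioi' ((continuous_stickyDensity hLK).intervalIntegrable _ _)
    (integrableOn_Ioi_stickyDensity hK hLK hR.le)]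
  calc M / 2 * ((∫ x in 0..R, stickyDensity M K L R x) + ∫ x in Ioi R, stickyDensity M K L R x)
      ≤ M / 2 * (R * exp E / max 1 (c * R) + exp E * (2 * √(π / K))) := by
        gcongr
        · exact (integral_stickyDensity_le hL.le hLK hR.le (by positivity)).trans
            (exp_mul_sub_one_div_le (by positivity) hR.le hcE)
        · exact setIntegral_Ioi_stickyDensity_le hK hLK hR.le
    _ = (√(π / K) + 2 * R / max 4 (2 * M * R + L * R ^ 2)) * M * exp E := by
        rw [hmax]
        field_simp
        ring

theorem alpha_bound_large_M (M K L R : ℝ) (hM : 0 < M) (hL : 0 < L)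
    (hK : 0 < K) (hR : 0 < R) (hMK : K * R ≤ M)
    (κ : ℝ → ℝ) (hκ : ∀ r, κ r = if r < R then L else -K)
    (α : ℝ)
    (hα : α = (M / 2) * ∫ x in Set.Ioi (0:ℝ),
        Real.exp ((1/2) * ∫ y in (0:ℝ)..x, M + κ y * y)) :
    α ≤ (Real.sqrt (Real.pi / K) + 2 * R / max 4 (2 * M * R + L * R ^ 2)) * M *
        Real.exp (M ^ 2 / (4 * K) + (L + K) * R ^ 2 / 4) :=
  alpha_bound_large_M_general M K L R hM hL hK hR κ hκ α hα
end

section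
/- Let a : [0,∞) → ℝ be continuous with a(0) > 0 and limsup a(r)/r < 0, and define φ(r) = exp(−(1/2)∫₀^r a(s)⁺ ds), Φ(r) = ∫₀^r φ(s) ds, R₀, R₁ as above, g(r) = 1 − (1/4)∫₀^{r∧R₁} (Φ(s)/φ(s)) ds / ∫₀^{R₁} (Φ(s)/φ(s)) ds − (1/4)∫₀^{r∧R₁} (1/φ(s)) ds / ∫₀^{R₁} (1/φ(s)) ds, and f(r) = ∫₀^r φ(s) g(s) ds. Then 1/2 ≤ g(r) ≤ 1 for all r ≥ 0, f is nondecreasing and concave, and Φ(r)/2 ≤ f(r) ≤ Φ(r) ≤ r for all r ≥ 0. -/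
/-!
Since `a⁺ ≥ 0`, `φ` is positive, continuous and nonincreasing on `[0, ∞)` with `φ 0 = 1`.
Each quotient in `g` has the form `r ↦ P (r ∧ R₁) / P R₁` for a primitive `P` of a nonnegative
function, so it is nondecreasing on `[0, ∞)` with values in `[0, 1]`; hence `g` is nonincreasing
with values in `[1/2, 1]`. Then `f' = φ g` is nonnegative and nonincreasing, which makes `f`
nondecreasing and concave, and integrating `φ / 2 ≤ φ g ≤ φ ≤ 1` gives `Φ / 2 ≤ f ≤ Φ ≤ r`.
-/

open Filter MeasureTheory Set

lemma AntitoneOn.mul_of_nonneg {α M₀ : Type*} [Preorder α] [Mul M₀] [Zero M₀] [Preorder M₀]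
    [PosMulMono M₀] [MulPosMono M₀] {s : Set α} {f g : α → M₀} (hf : AntitoneOn f s)
    (hg : AntitoneOn g s) (hf₀ : ∀ x ∈ s, 0 ≤ f x) (hg₀ : ∀ x ∈ s, 0 ≤ g x) :
    AntitoneOn (f * g) s :=
  fun _ hx _ hy h => mul_le_mul (hf hx hy h) (hg hx hy h) (hg₀ _ hy) (hf₀ _ hx)

lemma Continuous.continuous_primitive {h : ℝ → ℝ} (hc : Continuous h) (a : ℝ) :
    Continuous fun r => ∫ s in a..r, h s :=
  intervalIntegral.continuous_primitive (hc.intervalIntegrable (μ := volume)) a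

lemma monotoneOn_integral_of_nonneg {h : ℝ → ℝ} (hc : Continuous h) {a : ℝ}
    (hnn : ∀ s, a ≤ s → 0 ≤ h s) : MonotoneOn (fun r => ∫ s in a..r, h s) (Ici a) :=
  fun _ hx y _ hxy => intervalIntegral.integral_mono_interval le_rfl hx hxy
    (ae_restrict_of_forall_mem measurableSet_Ioc fun s hs => hnn s hs.1.le)
    (hc.intervalIntegrable a y)

lemma concaveOn_integral_of_antitoneOn {h : ℝ → ℝ} (hc : Continuous h) {D : Set ℝ}
    (hD : Convex ℝ D) (hanti : AntitoneOn h D) (a : ℝ) :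
    ConcaveOn ℝ D (fun r => ∫ s in a..r, h s) := by
  have hderiv (r : ℝ) : HasDerivAt (fun r => ∫ s in a..r, h s) (h r) r :=
    (hc.integral_hasStrictDerivAt a r).hasDerivAt
  refine AntitoneOn.concaveOn_of_deriv hD
    (fun r _ => (hderiv r).continuousAt.continuousWithinAt)
    (fun r _ => (hderiv r).differentiableAt.differentiableWithinAt) ?_
  rw [funext (hc.deriv_integral h a)]
  exact hanti.mono interior_subset

noncomputable def stoppedRatio (p : ℝ → ℝ) (R r : ℝ) : ℝ :=
  (∫ s in (0:ℝ)..min r R, p s) / ∫ s in (0:ℝ)..R, p s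

section stoppedRatio

variable {p : ℝ → ℝ} (R : ℝ)

lemma continuous_stoppedRatio (hp : Continuous p) : Continuous (stoppedRatio p R) := by
  have := hp.continuous_primitive 0
  unfold stoppedRatio
  fun_prop

lemma stoppedRatio_mem_Icc (hp : Continuous p) (hp0 : ∀ s, 0 ≤ s → 0 ≤ p s) {r : ℝ}
    (hr : 0 ≤ r) : stoppedRatio p R r ∈ Icc 0 1 := by
  unfold stoppedRatio
  rcases le_total R r with hRr | hrR
  · rw [min_eq_right hRr]
    refine ⟨?_, div_self_le_one _⟩
    obtain h | h := eq_or_ne (∫ s in (0:ℝ)..R, p s) 0 <;> simp [h]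
  · have hr0 : 0 ≤ ∫ s in (0:ℝ)..r, p s :=
      intervalIntegral.integral_nonneg hr fun s hs => hp0 s hs.1
    have hrR' := monotoneOn_integral_of_nonneg hp hp0 hr (hr.trans hrR) hrR
    rw [min_eq_left hrR]
    exact ⟨div_nonneg hr0 (hr0.trans hrR'), div_le_one_of_le₀ hrR' (hr0.trans hrR')⟩

lemma stoppedRatio_monotoneOn (hp : Continuous p) (hp0 : ∀ s, 0 ≤ s → 0 ≤ p s) :
    MonotoneOn (stoppedRatio p R) (Ici 0) := by
  intro x hx y hy hxy
  unfold stoppedRatio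
  rcases le_total R x with hRx | hxR
  · rw [min_eq_right hRx, min_eq_right (hRx.trans hxy)]
  · have hR : (0:ℝ) ≤ R := hx.trans hxR
    rw [min_eq_left hxR]
    exact div_le_div_of_nonneg_right
      (monotoneOn_integral_of_nonneg hp hp0 hx (le_min hy hR) (le_min hxy hxR))
      (intervalIntegral.integral_nonneg hR fun s hs => hp0 s hs.1)

end stoppedRatio

noncomputable def cutoffWeight (φ : ℝ → ℝ) (R r : ℝ) : ℝ :=
  1 - stoppedRatio (fun s => (∫ t in (0:ℝ)..s, φ t) / φ s) R r / 4
    - stoppedRatio (fun s => 1 / φ s) R r / 4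

section cutoffWeight

variable {φ : ℝ → ℝ} (R : ℝ)

lemma continuous_primitive_div (hφc : Continuous φ) (hφpos : ∀ r, 0 < φ r) :
    Continuous fun s => (∫ t in (0:ℝ)..s, φ t) / φ s :=
  (hφc.continuous_primitive 0).div hφc fun s => (hφpos s).ne'

lemma primitive_div_nonneg (hφpos : ∀ r, 0 < φ r) {s : ℝ} (hs : 0 ≤ s) :
    0 ≤ (∫ t in (0:ℝ)..s, φ t) / φ s :=
  div_nonneg (intervalIntegral.integral_nonneg hs fun u _ => (hφpos u).le) (hφpos s).le

lemma continuous_one_div_of_pos (hφc : Continuous φ) (hφpos : ∀ r, 0 < φ r) :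
    Continuous fun s => 1 / φ s :=
  continuous_const.div hφc fun s => (hφpos s).ne'

lemma continuous_cutoffWeight (hφc : Continuous φ) (hφpos : ∀ r, 0 < φ r) :
    Continuous (cutoffWeight φ R) := by
  have := continuous_stoppedRatio R (continuous_primitive_div hφc hφpos)
  have := continuous_stoppedRatio R (continuous_one_div_of_pos hφc hφpos)
  unfold cutoffWeight
  fun_prop

lemma cutoffWeight_mem_Icc (hφc : Continuous φ) (hφpos : ∀ r, 0 < φ r) {r : ℝ} (hr : 0 ≤ r) :
    cutoffWeight φ R r ∈ Icc (1/2) 1 := by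
  obtain ⟨hp₀, hp₁⟩ := stoppedRatio_mem_Icc R (continuous_primitive_div hφc hφpos)
    (fun _ => primitive_div_nonneg hφpos) hr
  obtain ⟨hq₀, hq₁⟩ := stoppedRatio_mem_Icc R (continuous_one_div_of_pos hφc hφpos)
    (fun s _ => one_div_nonneg.2 (hφpos s).le) hr
  unfold cutoffWeight
  constructor <;> linarith

lemma cutoffWeight_antitoneOn (hφc : Continuous φ) (hφpos : ∀ r, 0 < φ r) :
    AntitoneOn (cutoffWeight φ R) (Ici 0) := by
  intro x hx y hy hxy
  have := stoppedRatio_monotoneOn R (continuous_primitive_div hφc hφpos)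
    (fun _ => primitive_div_nonneg hφpos) hx hy hxy
  have := stoppedRatio_monotoneOn R (continuous_one_div_of_pos hφc hφpos)
    (fun s _ => one_div_nonneg.2 (hφpos s).le) hx hy hxy
  unfold cutoffWeight
  linarith

end cutoffWeight

lemma continuous_exp_neg_integral {h : ℝ → ℝ} (hc : Continuous h) (c : ℝ) :
    Continuous fun r => Real.exp (-c * ∫ s in (0:ℝ)..r, h s) := by
  have := hc.continuous_primitive 0
  fun_prop

lemma antitoneOn_exp_neg_integral {h : ℝ → ℝ} (hc : Continuous h) (hnn : ∀ s, 0 ≤ s → 0 ≤ h s)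
    {c : ℝ} (hc0 : 0 ≤ c) :
    AntitoneOn (fun r => Real.exp (-c * ∫ s in (0:ℝ)..r, h s)) (Ici 0) := by
  intro x hx y hy hxy
  simp only [neg_mul, Real.exp_le_exp, neg_le_neg_iff]
  exact mul_le_mul_of_nonneg_left (monotoneOn_integral_of_nonneg hc hnn hx hy hxy) hc0

lemma half_integral_le_integral_mul_le_integral {φ w : ℝ → ℝ} (hφc : Continuous φ)
    (hwc : Continuous w) (hφ : ∀ s, 0 ≤ s → 0 ≤ φ s) (hw : ∀ s, 0 ≤ s → w s ∈ Icc (1/2) 1)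
    {r : ℝ} (hr : 0 ≤ r) :
    (∫ s in (0:ℝ)..r, φ s) / 2 ≤ ∫ s in (0:ℝ)..r, φ s * w s ∧
      ∫ s in (0:ℝ)..r, φ s * w s ≤ ∫ s in (0:ℝ)..r, φ s := by
  have hφi := hφc.intervalIntegrable (μ := volume) 0 r
  have hφwi := (hφc.mul hwc).intervalIntegrable (μ := volume) 0 r
  rw [← intervalIntegral.integral_div]
  constructor
  · refine intervalIntegral.integral_mono_on hr (hφi.div_const 2) hφwi fun s hs => ?_
    rw [div_eq_mul_one_div]
    exact mul_le_mul_of_nonneg_left (hw s hs.1).1 (hφ s hs.1)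
  · refine intervalIntegral.integral_mono_on hr hφwi hφi fun s hs => ?_
    exact mul_le_of_le_one_right (hφ s hs.1) (hw s hs.1).2

theorem f_g_properties_general (a φ Φ g f : ℝ → ℝ) (R₁ : ℝ)
    (ha : Continuous a)
    (hφ : ∀ r, φ r = Real.exp (-(1/2) * ∫ s in (0:ℝ)..r, max (a s) 0))
    (hΦ : ∀ r, Φ r = ∫ s in (0:ℝ)..r, φ s)
    (hg : ∀ r, g r = 1
        - (1/4) * (∫ s in (0:ℝ)..(min r R₁), Φ s / φ s) /
            (∫ s in (0:ℝ)..R₁, Φ s / φ s)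
        - (1/4) * (∫ s in (0:ℝ)..(min r R₁), 1 / φ s) /
            (∫ s in (0:ℝ)..R₁, 1 / φ s))
    (hf : ∀ r, f r = ∫ s in (0:ℝ)..r, φ s * g s) :
    (∀ r ≥ (0:ℝ), 1/2 ≤ g r ∧ g r ≤ 1) ∧
    MonotoneOn f (Set.Ici 0) ∧
    ConcaveOn ℝ (Set.Ici 0) f ∧
    (∀ r ≥ (0:ℝ), Φ r / 2 ≤ f r ∧ f r ≤ Φ r ∧ Φ r ≤ r) := by
  have hapos : Continuous fun s => max (a s) 0 := ha.max continuous_const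
  have hφpos (r : ℝ) : 0 < φ r := hφ r ▸ Real.exp_pos _
  have hφc : Continuous φ := funext hφ ▸ continuous_exp_neg_integral hapos _
  have hφanti : AntitoneOn φ (Ici 0) :=
    funext hφ ▸ antitoneOn_exp_neg_integral hapos (fun _ _ => le_max_right _ _) (by norm_num)
  have hφ0 : φ 0 = 1 := by simp [hφ]
  have hgw : g = cutoffWeight φ R₁ := by
    ext r
    simp only [hg, hΦ, cutoffWeight, stoppedRatio]
    ring
  have hgIcc (r : ℝ) (hr : 0 ≤ r) : g r ∈ Icc (1/2) 1 := hgw ▸ cutoffWeight_mem_Icc R₁ hφc hφpos hr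
  have hg0 (s : ℝ) (hs : 0 ≤ s) : 0 ≤ g s := by linarith [(hgIcc s hs).1]
  have hgc : Continuous g := hgw ▸ continuous_cutoffWeight R₁ hφc hφpos
  have hfe : f = fun r => ∫ s in (0:ℝ)..r, (φ * g) s := funext hf
  have hmono : MonotoneOn f (Ici 0) := hfe ▸ monotoneOn_integral_of_nonneg (hφc.mul hgc)
    fun s hs => mul_nonneg (hφpos s).le (hg0 s hs)
  have hconc : ConcaveOn ℝ (Ici 0) f := hfe ▸ concaveOn_integral_of_antitoneOn (hφc.mul hgc)
    (convex_Ici 0) (hφanti.mul_of_nonneg (hgw ▸ cutoffWeight_antitoneOn R₁ hφc hφpos)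
      (fun s _ => (hφpos s).le) hg0) 0
  refine ⟨hgIcc, hmono, hconc, fun r hr => ?_⟩
  rw [hf, hΦ]
  obtain ⟨hlow, hup⟩ :=
    half_integral_le_integral_mul_le_integral hφc hgc (fun s _ => (hφpos s).le) hgIcc hr
  refine ⟨hlow, hup, ?_⟩
  calc ∫ s in (0:ℝ)..r, φ s ≤ ∫ _ in (0:ℝ)..r, (1:ℝ) :=
        intervalIntegral.integral_mono_on hr (hφc.intervalIntegrable 0 r)
          intervalIntegrable_const fun s hs => hφ0 ▸ hφanti self_mem_Ici hs.1 hs.1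
    _ = r := by simp

theorem f_g_properties (a φ Φ g f : ℝ → ℝ) (R₀ R₁ : ℝ)
    (ha : Continuous a) (ha0 : 0 < a 0)
    (hlim : limsup (fun r => a r / r) atTop < 0)
    (hφ : ∀ r, φ r = Real.exp (-(1/2) * ∫ s in (0:ℝ)..r, max (a s) 0))
    (hΦ : ∀ r, Φ r = ∫ s in (0:ℝ)..r, φ s)
    (hR₀ : R₀ = sInf {R : ℝ | 0 ≤ R ∧ ∀ r ≥ R, a r ≤ 0})
    (hR₁ : R₁ = sInf {R : ℝ | R₀ ≤ R ∧ ∀ r ≥ R, R * (R - R₀) * (a r / r) ≤ -4})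
    (hg : ∀ r, g r = 1
        - (1/4) * (∫ s in (0:ℝ)..(min r R₁), Φ s / φ s) /
            (∫ s in (0:ℝ)..R₁, Φ s / φ s)
        - (1/4) * (∫ s in (0:ℝ)..(min r R₁), 1 / φ s) /
            (∫ s in (0:ℝ)..R₁, 1 / φ s))
    (hf : ∀ r, f r = ∫ s in (0:ℝ)..r, φ s * g s) :
    (∀ r ≥ (0:ℝ), 1/2 ≤ g r ∧ g r ≤ 1) ∧
    MonotoneOn f (Set.Ici 0) ∧
    ConcaveOn ℝ (Set.Ici 0) f ∧
    (∀ r ≥ (0:ℝ), Φ r / 2 ≤ f r ∧ f r ≤ Φ r ∧ Φ r ≤ r) :=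
  f_g_properties_general a φ Φ g f R₁ ha hφ hΦ hg hf
end

section
/- With a, φ, Φ, f, R₀, R₁, c, ε as above, for every r > R₁ one has f'(r)·a(r) ≤ −(ε + c f(r)). -/
/-!
Since `a ≤ 0` beyond `R₀`, the weight `φ` is constant there, so `Φ` is affine with slope `φ(R₀)`
on `[R₀, ∞)`, and beyond `R₁` the profile `g` equals `1/2`, whence `f'(r) = φ(R₀)/2`. The choice of
`R₁` gives `a(r) ≤ -4r / (R₁(R₁ - R₀))`, so `f'(r) a(r) ≤ -2φ(R₀) r / (R₁(R₁ - R₀))`. On the other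
side `ε + c f(r) ≤ cΦ(R₁) + cΦ(r) ≤ 2cΦ(R₁) r / R₁` because `f ≤ Φ` and `Φ(r)/r` decreases, and
computing `∫_{R₀}^{R₁} Φ/φ` exactly gives `2 (∫_0^{R₁} Φ/φ) φ(R₀) ≥ (R₁ - R₀) Φ(R₁)`, that is,
`cΦ(R₁)(R₁ - R₀) ≤ φ(R₀)`.

The infima `R₀` and `R₁` satisfy their defining conditions themselves, these being closed.
-/

open Filter MeasureTheory Set intervalIntegral

theorem exists_neg_eventually_le_of_limsup_neg {α : Type*} {l : Filter α} {u : α → ℝ}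
    (h : limsup u l < 0) : ∃ b < 0, ∀ᶠ x in l, u x ≤ b := by
  rw [limsup_eq] at h
  -- otherwise the limsup would be the junk value `sInf ∅ = 0`
  have hne : {b | ∀ᶠ x in l, u x ≤ b}.Nonempty := by
    by_contra hemp
    rw [not_nonempty_iff_eq_empty.1 hemp, Real.sInf_empty] at h
    exact h.false
  obtain ⟨b, hb, hb0⟩ := exists_lt_of_csInf_lt hne h
  exact ⟨b, hb0, hb⟩

theorem Ici_csInf_subset_of_isClosed {S P : Set ℝ} (hP : IsClosed P) (hS : S.Nonempty)
    (hSP : ∀ R ∈ S, Ici R ⊆ P) : Ici (sInf S) ⊆ P := by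
  rw [← closure_Ioi]
  refine closure_minimal (fun x hx => ?_) hP
  obtain ⟨R, hR, hRx⟩ := exists_lt_of_csInf_lt hS hx
  exact hSP R hR hRx.le

theorem csInf_mem_of_isClosed_of_lt {S B : Set ℝ} {x : ℝ} (hB : IsClosed B) (hS : S.Nonempty)
    (hbdd : BddBelow S) (hx : sInf S < x) (hSB : ∀ R ∈ S, R ≤ x → R ∈ B) : sInf S ∈ B := by
  have hcl : closure S ⊆ Ici x ∪ B :=
    closure_minimal (fun R hR => (le_or_gt R x).elim (fun h => .inr (hSB R hR h))
      fun h => .inl h.le) (isClosed_Ici.union hB)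
  exact (hcl (csInf_mem_closure hS hbdd)).resolve_left hx.not_ge

theorem integral_eq_add_mul_of_eqOn {h : ℝ → ℝ} {u x C : ℝ} (hh : Continuous h) (hux : u ≤ x)
    (hC : EqOn h (fun _ => C) (Icc u x)) :
    ∫ s in (0:ℝ)..x, h s = (∫ s in (0:ℝ)..u, h s) + (x - u) * C := by
  rw [← integral_add_adjacent_intervals (hh.intervalIntegrable 0 u) (hh.intervalIntegrable u x),
    integral_congr (a := u) (by rwa [uIcc_of_le hux]), intervalIntegral.integral_const,
    smul_eq_mul]

section Thresholds

variable {a : ℝ → ℝ}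

theorem eventually_nonpos_of_limsup_div_neg (hlim : limsup (fun r => a r / r) atTop < 0) :
    ∀ᶠ r in atTop, a r ≤ 0 := by
  obtain ⟨b, hb, hab⟩ := exists_neg_eventually_le_of_limsup_neg hlim
  filter_upwards [hab, eventually_gt_atTop 0] with r hr hr0
  simpa using (div_le_iff₀ hr0).1 (hr.trans hb.le)

theorem nonneg_and_forall_ge_nonpos_of_eq_sInf (ha : Continuous a)
    (hlim : limsup (fun r => a r / r) atTop < 0) {R₀ : ℝ}
    (hR₀ : R₀ = sInf {R : ℝ | 0 ≤ R ∧ ∀ r ≥ R, a r ≤ 0}) :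
    0 ≤ R₀ ∧ ∀ r ≥ R₀, a r ≤ 0 := by
  obtain ⟨R, hR⟩ := eventually_atTop.1 (eventually_nonpos_of_limsup_div_neg hlim)
  have hne : {R : ℝ | 0 ≤ R ∧ ∀ r ≥ R, a r ≤ 0}.Nonempty :=
    ⟨max R 0, le_max_right R 0, fun r hr => hR r (le_of_max_le_left hr)⟩
  subst hR₀
  exact ⟨le_csInf hne fun R hR => hR.1,
    Ici_csInf_subset_of_isClosed (isClosed_le ha continuous_const) hne fun R hR => hR.2⟩

theorem exists_mul_sub_mul_div_le (hlim : limsup (fun r => a r / r) atTop < 0) (R₀ : ℝ) :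
    ∃ R, R₀ ≤ R ∧ ∀ r ≥ R, R * (R - R₀) * (a r / r) ≤ -4 := by
  obtain ⟨b, hb, hab⟩ := exists_neg_eventually_le_of_limsup_neg hlim
  have hgrowth : Tendsto (fun R => R * (R - R₀)) atTop atTop :=
    tendsto_id.atTop_mul_atTop₀ (tendsto_atTop_add_const_right _ _ tendsto_id)
  obtain ⟨R, hRR₀, hRb, hR⟩ := ((eventually_ge_atTop R₀).and
    ((eventually_forall_ge_atTop.2 hab).and (hgrowth.eventually_ge_atTop (4 / -b)))).exists
  refine ⟨R, hRR₀, fun r hr => ?_⟩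
  have hpos : 0 ≤ R * (R - R₀) := (div_pos four_pos (neg_pos.2 hb)).le.trans hR
  calc R * (R - R₀) * (a r / r) ≤ R * (R - R₀) * b := mul_le_mul_of_nonneg_left (hRb r hr) hpos
    _ ≤ 4 / -b * b := mul_le_mul_of_nonpos_right hR hb.le
    _ = -4 := by field_simp [hb.ne]

theorem lt_and_forall_gt_mul_sub_mul_div_le_of_eq_sInf (hlim : limsup (fun r => a r / r) atTop < 0)
    {R₀ R₁ : ℝ} (hR₁ : R₁ = sInf {R : ℝ | R₀ ≤ R ∧ ∀ r ≥ R, R * (R - R₀) * (a r / r) ≤ -4}) :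
    R₀ < R₁ ∧ ∀ x > R₁, R₁ * (R₁ - R₀) * (a x / x) ≤ -4 := by
  have hne := exists_mul_sub_mul_div_le hlim R₀
  have hbdd : BddBelow {R : ℝ | R₀ ≤ R ∧ ∀ r ≥ R, R * (R - R₀) * (a r / r) ≤ -4} :=
    ⟨R₀, fun R hR => hR.1⟩
  have hdrift : ∀ x > R₁, R₁ * (R₁ - R₀) * (a x / x) ≤ -4 := fun x hx => by
    subst hR₁
    exact csInf_mem_of_isClosed_of_lt (B := {R | R * (R - R₀) * (a x / x) ≤ -4})
      (isClosed_le (by fun_prop) continuous_const) hne hbdd hx fun R hR hRx => hR.2 x hRx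
  refine ⟨lt_of_le_of_ne (hR₁ ▸ le_csInf hne fun R hR => hR.1) fun h => ?_, hdrift⟩
  have := hdrift (R₁ + 1) (lt_add_one R₁)
  rw [← h, sub_self] at this
  norm_num at this

end Thresholds

section Weight

variable {h φ : ℝ → ℝ}

theorem weight_pos (hφ : ∀ r, φ r = Real.exp (-(1/2) * ∫ s in (0:ℝ)..r, h s)) (x : ℝ) :
    0 < φ x :=
  hφ x ▸ Real.exp_pos _

theorem weight_continuous (hh : Continuous h)
    (hφ : ∀ r, φ r = Real.exp (-(1/2) * ∫ s in (0:ℝ)..r, h s)) : Continuous φ := by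
  have := continuous_primitive (μ := volume) (fun _ _ => hh.intervalIntegrable _ _) 0
  rw [funext hφ]
  fun_prop

theorem weight_antitone (hh : Continuous h) (hh0 : ∀ s, 0 ≤ h s)
    (hφ : ∀ r, φ r = Real.exp (-(1/2) * ∫ s in (0:ℝ)..r, h s)) : Antitone φ := by
  have hmono : Monotone fun r => ∫ s in (0:ℝ)..r, h s :=
    monotone_of_deriv_nonneg
      (fun x => (hh.integral_hasStrictDerivAt 0 x).hasDerivAt.differentiableAt)
      fun x => (hh.deriv_integral _ 0 x).symm ▸ hh0 x
  intro x y hxy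
  rw [hφ, hφ, Real.exp_le_exp]
  linarith [hmono hxy]

theorem weight_eq_of_ge (hh : Continuous h)
    (hφ : ∀ r, φ r = Real.exp (-(1/2) * ∫ s in (0:ℝ)..r, h s)) {u : ℝ}
    (hu : ∀ s ≥ u, h s = 0) : ∀ x ≥ u, φ x = φ u := fun x hx => by
  rw [hφ, hφ, integral_eq_add_mul_of_eqOn hh hx fun s hs => hu s hs.1, mul_zero, add_zero]

end Weight

section Primitive

variable {φ Φ : ℝ → ℝ}

theorem primitive_continuous (hφc : Continuous φ) (hΦ : ∀ x, Φ x = ∫ s in (0:ℝ)..x, φ s) :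
    Continuous Φ :=
  funext hΦ ▸ continuous_primitive (μ := volume) (fun _ _ => hφc.intervalIntegrable _ _) 0

theorem primitive_nonneg (hφ : ∀ x, 0 ≤ φ x) (hΦ : ∀ x, Φ x = ∫ s in (0:ℝ)..x, φ s) {x : ℝ}
    (hx : 0 ≤ x) : 0 ≤ Φ x :=
  hΦ x ▸ integral_nonneg hx fun s _ => hφ s

theorem primitive_pos (hφc : Continuous φ) (hφ : ∀ x, 0 < φ x)
    (hΦ : ∀ x, Φ x = ∫ s in (0:ℝ)..x, φ s) {x : ℝ} (hx : 0 < x) : 0 < Φ x :=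
  hΦ x ▸ intervalIntegral_pos_of_pos_on (hφc.intervalIntegrable 0 x) (fun s _ => hφ s) hx

theorem primitive_eq_add_mul (hφc : Continuous φ) (hΦ : ∀ x, Φ x = ∫ s in (0:ℝ)..x, φ s)
    {u : ℝ} (hφu : ∀ x ≥ u, φ x = φ u) : ∀ x ≥ u, Φ x = Φ u + (x - u) * φ u := fun x hx => by
  simpa only [hΦ] using integral_eq_add_mul_of_eqOn hφc hx fun s hs => hφu s hs.1

theorem primitive_mul_le_mul (hφc : Continuous φ) (hφ : Antitone φ)
    (hΦ : ∀ x, Φ x = ∫ s in (0:ℝ)..x, φ s) {u R r : ℝ} (hu : 0 ≤ u)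
    (hφu : ∀ x ≥ u, φ x = φ u) (huR : u ≤ R) (hRr : R ≤ r) : Φ r * R ≤ Φ R * r := by
  have hΦu : u * φ u ≤ Φ u := by
    calc u * φ u = ∫ _ in (0:ℝ)..u, φ u := by simp
      _ ≤ Φ u := hΦ u ▸ integral_mono_on hu intervalIntegrable_const
        (hφc.intervalIntegrable 0 u) fun s hs => hφ hs.2
  rw [primitive_eq_add_mul hφc hΦ hφu r (huR.trans hRr), primitive_eq_add_mul hφc hΦ hφu R huR]
  nlinarith [mul_nonneg (sub_nonneg.2 hRr) (sub_nonneg.2 hΦu)]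

theorem sub_mul_le_two_mul_integral_div_mul (hφc : Continuous φ) (hφ : ∀ x, 0 < φ x)
    (hΦ : ∀ x, Φ x = ∫ s in (0:ℝ)..x, φ s) {u R : ℝ} (hu : 0 ≤ u) (hφu : ∀ x ≥ u, φ x = φ u)
    (huR : u ≤ R) : (R - u) * Φ R ≤ 2 * (∫ s in (0:ℝ)..R, Φ s / φ s) * φ u := by
  have hΦnn : ∀ x ≥ 0, 0 ≤ Φ x := fun x hx => primitive_nonneg (fun s => (hφ s).le) hΦ hx
  have hΦu := primitive_eq_add_mul hφc hΦ hφu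
  have hdiv : Continuous fun s => Φ s / φ s :=
    (primitive_continuous hφc hΦ).div hφc fun s => (hφ s).ne'
  have hhead : 0 ≤ ∫ s in (0:ℝ)..u, Φ s / φ s :=
    integral_nonneg hu fun s hs => div_nonneg (hΦnn s hs.1) (hφ s).le
  have htail : ∫ s in u..R, Φ s / φ s = (R - u) * (Φ u / φ u) + (R - u) ^ 2 / 2 := by
    have haff : EqOn (fun s => Φ s / φ s) (fun s => Φ u / φ u + (s - u)) (uIcc u R) := by
      intro s hs
      rw [uIcc_of_le huR] at hs
      simp only [hΦu s hs.1, hφu s hs.1, add_div, mul_div_cancel_right₀ _ (hφ u).ne']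
    rw [integral_congr haff, integral_add intervalIntegrable_const
      ((continuous_sub_right u).intervalIntegrable u R), integral_comp_sub_right (fun s => s),
      integral_id]
    simp [mul_div_assoc]
  rw [← integral_add_adjacent_intervals (hdiv.intervalIntegrable 0 u)
    (hdiv.intervalIntegrable u R), htail, hΦu R huR]
  have hcancel : Φ u / φ u * φ u = Φ u := div_mul_cancel₀ _ (hφ u).ne'
  nlinarith [mul_nonneg hhead (hφ u).le, mul_nonneg (sub_nonneg.2 huR) (hΦnn u hu)]

end Primitive

noncomputable def halvingProfile (p q : ℝ → ℝ) (R r : ℝ) : ℝ :=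
  1 - (1/4) * (∫ s in (0:ℝ)..(min r R), p s) / (∫ s in (0:ℝ)..R, p s)
    - (1/4) * (∫ s in (0:ℝ)..(min r R), q s) / (∫ s in (0:ℝ)..R, q s)

section HalvingProfile

variable {p q : ℝ → ℝ} {R : ℝ}

theorem halvingProfile_of_le (hp : ∫ s in (0:ℝ)..R, p s ≠ 0) (hq : ∫ s in (0:ℝ)..R, q s ≠ 0)
    {r : ℝ} (hr : R ≤ r) : halvingProfile p q R r = 1/2 := by
  rw [halvingProfile, min_eq_right hr, mul_div_assoc, mul_div_assoc, div_self hp, div_self hq]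
  norm_num

theorem halvingProfile_le_one (hp : ∀ s ≥ 0, 0 ≤ p s) (hq : ∀ s ≥ 0, 0 ≤ q s) (hR : 0 ≤ R)
    {x : ℝ} (hx : 0 ≤ x) : halvingProfile p q R x ≤ 1 := by
  have hint : ∀ {k : ℝ → ℝ}, (∀ s ≥ 0, 0 ≤ k s) → ∀ {y}, 0 ≤ y → 0 ≤ ∫ s in (0:ℝ)..y, k s :=
    fun hk _ hy => integral_nonneg hy fun s hs => hk s hs.1
  have hpx := div_nonneg (hint hp (le_min hx hR)) (hint hp hR)
  have hqx := div_nonneg (hint hq (le_min hx hR)) (hint hq hR)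
  rw [halvingProfile, mul_div_assoc, mul_div_assoc]
  linarith

theorem continuous_halvingProfile (hp : Continuous p) (hq : Continuous q) :
    Continuous (halvingProfile p q R) := by
  have := continuous_primitive (μ := volume) (fun _ _ => hp.intervalIntegrable _ _) 0
  have := continuous_primitive (μ := volume) (fun _ _ => hq.intervalIntegrable _ _) 0
  unfold halvingProfile
  fun_prop

theorem deriv_integral_mul_halvingProfile {φ : ℝ → ℝ} (hφ : Continuous φ) (hp : Continuous p)
    (hq : Continuous q) (hpR : ∫ s in (0:ℝ)..R, p s ≠ 0) (hqR : ∫ s in (0:ℝ)..R, q s ≠ 0)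
    {r : ℝ} (hr : R ≤ r) :
    deriv (fun x => ∫ s in (0:ℝ)..x, φ s * halvingProfile p q R s) r = φ r / 2 := by
  rw [(hφ.mul (continuous_halvingProfile hp hq)).deriv_integral
    (fun s => φ s * halvingProfile p q R s) 0 r,
    halvingProfile_of_le hpR hqR hr]
  ring

theorem integral_mul_halvingProfile_le {φ : ℝ → ℝ} (hφc : Continuous φ) (hφ : ∀ s, 0 ≤ φ s)
    (hpc : Continuous p) (hqc : Continuous q) (hp : ∀ s ≥ 0, 0 ≤ p s) (hq : ∀ s ≥ 0, 0 ≤ q s)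
    (hR : 0 ≤ R) {x : ℝ} (hx : 0 ≤ x) :
    ∫ s in (0:ℝ)..x, φ s * halvingProfile p q R s ≤ ∫ s in (0:ℝ)..x, φ s :=
  integral_mono_on hx ((hφc.mul (continuous_halvingProfile hpc hqc)).intervalIntegrable _ _)
    (hφc.intervalIntegrable _ _) fun s hs =>
      mul_le_of_le_one_right (hφ s) (halvingProfile_le_one hp hq hR hs.1)

end HalvingProfile

theorem half_mul_le_neg_of_drift_bounds {φ₀ Φ₁ Φr fr ar I c ε R₀ R₁ r : ℝ} (hR₀R₁ : R₀ < R₁)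
    (hR₁ : 0 < R₁) (hr : R₁ < r) (hφ₀ : 0 < φ₀) (hΦ₁ : 0 ≤ Φ₁) (hI : 0 < I)
    (hc : c = (2 * I)⁻¹) (hIlow : (R₁ - R₀) * Φ₁ ≤ 2 * I * φ₀)
    (har : R₁ * (R₁ - R₀) * (ar / r) ≤ -4) (hε : ε ≤ c * Φ₁) (hfr : fr ≤ Φr)
    (hΦr : Φr * R₁ ≤ Φ₁ * r) : φ₀ / 2 * ar ≤ -(ε + c * fr) := by
  have hc0 : 0 < c := hc ▸ inv_pos.2 (by linarith)
  have hcΦ : c * Φ₁ * (R₁ - R₀) ≤ φ₀ := by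
    rw [hc, inv_mul_eq_div, div_mul_eq_mul_div, div_le_iff₀ (by linarith)]
    linarith
  rw [mul_div_assoc', div_le_iff₀ (by linarith)] at har
  have hsum : (ε + c * fr) * R₁ ≤ 2 * (c * Φ₁) * r := by
    nlinarith [mul_le_mul_of_nonneg_left hfr hc0.le, mul_nonneg hc0.le hΦ₁]
  refine le_of_mul_le_mul_right ?_ (mul_pos hR₁ (sub_pos.2 hR₀R₁))
  calc φ₀ / 2 * ar * (R₁ * (R₁ - R₀)) ≤ φ₀ / 2 * (-4 * r) := by nlinarith
    _ ≤ -(2 * r * (c * Φ₁ * (R₁ - R₀))) := by nlinarith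
    _ ≤ -((ε + c * fr) * R₁ * (R₁ - R₀)) := by nlinarith
    _ = -(ε + c * fr) * (R₁ * (R₁ - R₀)) := by ring

theorem f_drift_inequality_beyond_R1_general (a φ Φ g f : ℝ → ℝ) (R₀ R₁ c ε : ℝ)
    (ha : Continuous a)
    (hlim : limsup (fun r => a r / r) atTop < 0)
    (hφ : ∀ r, φ r = Real.exp (-(1/2) * ∫ s in (0:ℝ)..r, max (a s) 0))
    (hΦ : ∀ r, Φ r = ∫ s in (0:ℝ)..r, φ s)
    (hR₀ : R₀ = sInf {R : ℝ | 0 ≤ R ∧ ∀ r ≥ R, a r ≤ 0})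
    (hR₁ : R₁ = sInf {R : ℝ | R₀ ≤ R ∧ ∀ r ≥ R, R * (R - R₀) * (a r / r) ≤ -4})
    (hg : ∀ r, g r = 1
        - (1/4) * (∫ s in (0:ℝ)..(min r R₁), Φ s / φ s) /
            (∫ s in (0:ℝ)..R₁, Φ s / φ s)
        - (1/4) * (∫ s in (0:ℝ)..(min r R₁), 1 / φ s) /
            (∫ s in (0:ℝ)..R₁, 1 / φ s))
    (hf : ∀ r, f r = ∫ s in (0:ℝ)..r, φ s * g s)
    (hc : c = (2 * ∫ s in (0:ℝ)..R₁, Φ s / φ s)⁻¹)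
    (hε : ε = min (2 * ∫ s in (0:ℝ)..R₁, 1 / φ s)⁻¹ (c * Φ R₁)) :
    ∀ r > R₁, deriv f r * a r ≤ -(ε + c * f r) := by
  intro r hr
  obtain rfl : g = halvingProfile (fun s => Φ s / φ s) (fun s => 1 / φ s) R₁ := funext hg
  obtain rfl : f = fun x => ∫ s in (0:ℝ)..x, φ s * halvingProfile _ _ R₁ s := funext hf
  obtain ⟨hR₀, ha_nonpos⟩ := nonneg_and_forall_ge_nonpos_of_eq_sInf ha hlim hR₀
  obtain ⟨hR₀R₁, hdrift⟩ := lt_and_forall_gt_mul_sub_mul_div_le_of_eq_sInf hlim hR₁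
  have hR₁ : 0 < R₁ := hR₀.trans_lt hR₀R₁
  have hmax : Continuous fun s => max (a s) 0 := by fun_prop
  have hφpos := weight_pos hφ
  have hφnn : ∀ x, 0 ≤ φ x := fun x => (hφpos x).le
  have hφc := weight_continuous hmax hφ
  have hφR₀ : ∀ x ≥ R₀, φ x = φ R₀ :=
    weight_eq_of_ge hmax hφ fun s hs => max_eq_right (ha_nonpos s hs)
  have hp : Continuous fun s => Φ s / φ s :=
    (primitive_continuous hφc hΦ).div hφc fun s => (hφpos s).ne'
  have hq : Continuous fun s => 1 / φ s := continuous_const.div hφc fun s => (hφpos s).ne'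
  have hIp : 0 < ∫ s in (0:ℝ)..R₁, Φ s / φ s := intervalIntegral_pos_of_pos_on
    (hp.intervalIntegrable _ _) (fun s hs => div_pos (primitive_pos hφc hφpos hΦ hs.1) (hφpos s))
    hR₁
  have hIq : 0 < ∫ s in (0:ℝ)..R₁, 1 / φ s := intervalIntegral_pos_of_pos_on
    (hq.intervalIntegrable _ _) (fun s _ => one_div_pos.2 (hφpos s)) hR₁
  have hfΦ := hΦ r ▸ integral_mul_halvingProfile_le hφc hφnn hp hq
    (fun s hs => div_nonneg (primitive_nonneg hφnn hΦ hs) (hφpos s).le)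
    (fun s _ => (one_div_pos.2 (hφpos s)).le) hR₁.le (by linarith)
  have hΦr := primitive_mul_le_mul hφc (weight_antitone hmax (fun s => le_max_right _ _) hφ) hΦ
    hR₀ hφR₀ hR₀R₁.le hr.le
  have hIlow := sub_mul_le_two_mul_integral_div_mul hφc hφpos hΦ hR₀ hφR₀ hR₀R₁.le
  rw [deriv_integral_mul_halvingProfile hφc hp hq hIp.ne' hIq.ne' hr.le, hφR₀ r (by linarith)]
  exact half_mul_le_neg_of_drift_bounds hR₀R₁ hR₁ hr (hφpos R₀) (primitive_nonneg hφnn hΦ hR₁.le)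
    hIp hc hIlow (hdrift r hr) (hε ▸ min_le_right _ _) hfΦ hΦr

theorem f_drift_inequality_beyond_R1 (a φ Φ g f : ℝ → ℝ) (R₀ R₁ c ε : ℝ)
    (ha : Continuous a) (ha0 : 0 < a 0)
    (hlim : limsup (fun r => a r / r) atTop < 0)
    (hφ : ∀ r, φ r = Real.exp (-(1/2) * ∫ s in (0:ℝ)..r, max (a s) 0))
    (hΦ : ∀ r, Φ r = ∫ s in (0:ℝ)..r, φ s)
    (hR₀ : R₀ = sInf {R : ℝ | 0 ≤ R ∧ ∀ r ≥ R, a r ≤ 0})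
    (hR₁ : R₁ = sInf {R : ℝ | R₀ ≤ R ∧ ∀ r ≥ R, R * (R - R₀) * (a r / r) ≤ -4})
    (hg : ∀ r, g r = 1
        - (1/4) * (∫ s in (0:ℝ)..(min r R₁), Φ s / φ s) /
            (∫ s in (0:ℝ)..R₁, Φ s / φ s)
        - (1/4) * (∫ s in (0:ℝ)..(min r R₁), 1 / φ s) /
            (∫ s in (0:ℝ)..R₁, 1 / φ s))
    (hf : ∀ r, f r = ∫ s in (0:ℝ)..r, φ s * g s)
    (hc : c = (2 * ∫ s in (0:ℝ)..R₁, Φ s / φ s)⁻¹)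
    (hε : ε = min (2 * ∫ s in (0:ℝ)..R₁, 1 / φ s)⁻¹ (c * Φ R₁)) :
    ∀ r > R₁, deriv f r * a r ≤ -(ε + c * f r) :=
  f_drift_inequality_beyond_R1_general a φ Φ g f R₀ R₁ c ε ha hlim hφ hΦ hR₀ hR₁ hg hf hc hε
end
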